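/- arXiv:2204.03584 — 11 statements merged into one kernel-verified Lean document; each statement's English description precedes it below -/
import Mathlib

section
/- Let T be an operator function on Ω in the complex Hilbert space H. Then for every ε > 0 one has W_ε(T) = {λ ∈ Ω : ∃ f ∈ dom T(λ), ‖f‖ = 1, |⟨T(λ)f, f⟩| < ε}. Consequently, the pseudo numerical range satisfies W_Ψ(T) = {λ ∈ Ω : 0 ∈ closure(W(T(λ)))}. -/
open Filter Topology

noncomputable section

variable {H : Type*} [NormedAddCommGroup H] [InnerProductSpace ℂ H] [CompleteSpace H]

local notation "⟪" x ", " y "⟫" => @inner ℂ _ _ x y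

/-- The numerical range of a single (possibly unbounded) linear operator `S`,
`W(S) = {⟨Sf, f⟩ : f ∈ dom S, ‖f‖ = 1}` (the paper's inner product `⟨u, v⟩` is linear in `u`,
i.e. it is Mathlib's `⟪v, u⟫`). -/
def opNumRange (S : H →ₗ.[ℂ] H) : Set ℂ :=
  {z | ∃ f : S.domain, ‖(f : H)‖ = 1 ∧ ⟪(f : H), S f⟫ = z}

/-- The perturbation of a partially defined operator by a bounded operator,
on the unchanged domain. -/
def pert (S : H →ₗ.[ℂ] H) (B : H →L[ℂ] H) : H →ₗ.[ℂ] H :=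
  ⟨S.domain, S.toFun + B.toLinearMap.comp S.domain.subtype⟩

/-- The numerical range of an operator function `T` on `Ω`. -/
def Wfun (Ω : Set ℂ) (T : ℂ → H →ₗ.[ℂ] H) : Set ℂ :=
  {l | l ∈ Ω ∧ ∃ f : (T l).domain, ‖(f : H)‖ = 1 ∧ ⟪(f : H), (T l) f⟫ = 0}

/-- The `ε`-pseudo numerical range `W_ε(T) = ⋃_{‖B‖<ε} W(T+B)`. -/
def Weps (Ω : Set ℂ) (T : ℂ → H →ₗ.[ℂ] H) (ε : ℝ) : Set ℂ :=
  ⋃ (B : H →L[ℂ] H) (_ : ‖B‖ < ε), Wfun Ω (fun l => pert (T l) B)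

/-- The pseudo numerical range `W_Ψ(T) = ⋂_{ε>0} W_ε(T)`. -/
def Wpsi (Ω : Set ℂ) (T : ℂ → H →ₗ.[ℂ] H) : Set ℂ := ⋂ ε > 0, Weps Ω T ε

/-! A bounded perturbation `B` moves `⟨T(λ)f, f⟩` by `⟨Bf, f⟩`, of modulus at most `‖B‖`;
conversely the scalar perturbation `-⟨T(λ)f, f⟩ • I`, of norm `|⟨T(λ)f, f⟩|`, puts `0` into
`W(T(λ) + B)`. Intersecting over `ε > 0` gives the pseudo numerical range. -/

section

omit [CompleteSpace H]

theorem pert_apply (S : H →ₗ.[ℂ] H) (B : H →L[ℂ] H) (f : S.domain) :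
    pert S B f = S f + B (f : H) :=
  rfl

theorem norm_inner_le_of_inner_pert_eq_zero {S : H →ₗ.[ℂ] H} {B : H →L[ℂ] H} {f : S.domain}
    (hf : ‖(f : H)‖ = 1) (h : ⟪(f : H), pert S B f⟫ = 0) : ‖⟪(f : H), S f⟫‖ ≤ ‖B‖ := by
  rw [pert_apply, inner_add_right, add_eq_zero_iff_eq_neg] at h
  calc ‖⟪(f : H), S f⟫‖ = ‖⟪(f : H), B (f : H)⟫‖ := by rw [h, norm_neg]
    _ ≤ ‖(f : H)‖ * ‖B (f : H)‖ := norm_inner_le_norm _ _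
    _ ≤ ‖(f : H)‖ * (‖B‖ * ‖(f : H)‖) := by gcongr; exact B.le_opNorm _
    _ = ‖B‖ := by rw [hf]; ring

theorem inner_pert_smul_id {S : H →ₗ.[ℂ] H} (c : ℂ) {f : S.domain} (hf : ‖(f : H)‖ = 1) :
    ⟪(f : H), pert S (c • ContinuousLinearMap.id ℂ H) f⟫ = ⟪(f : H), S f⟫ + c := by
  have hff : ⟪(f : H), (f : H)⟫ = 1 := by
    rw [inner_self_eq_norm_sq_to_K, hf]; norm_num
  rw [pert_apply, inner_add_right, smul_apply,
    ContinuousLinearMap.id_apply, inner_smul_right, hff, mul_one]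

theorem Weps_eq (Ω : Set ℂ) (T : ℂ → H →ₗ.[ℂ] H) (ε : ℝ) :
    Weps Ω T ε = {l | l ∈ Ω ∧ ∃ f : (T l).domain, ‖(f : H)‖ = 1 ∧
      ‖⟪(f : H), (T l) f⟫‖ < ε} := by
  ext l
  simp only [Weps, Wfun, Set.mem_iUnion, Set.mem_ofPred_eq]
  constructor
  · rintro ⟨B, hB, hΩ, f, hf, hzero⟩
    exact ⟨hΩ, f, hf, (norm_inner_le_of_inner_pert_eq_zero (S := T l) hf hzero).trans_lt hB⟩
  · rintro ⟨hΩ, f, hf, hlt⟩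
    set z := ⟪(f : H), (T l) f⟫
    refine ⟨(-z) • ContinuousLinearMap.id ℂ H, ?_, hΩ, f, hf, ?_⟩
    · calc ‖(-z) • ContinuousLinearMap.id ℂ H‖ ≤ ‖-z‖ * ‖ContinuousLinearMap.id ℂ H‖ :=
            ContinuousLinearMap.opNorm_smul_le _ _
        _ ≤ ‖-z‖ * 1 := by gcongr; exact ContinuousLinearMap.norm_id_le
        _ < ε := by rwa [mul_one, norm_neg]
    · rw [inner_pert_smul_id _ hf, add_neg_cancel]

theorem zero_mem_closure_opNumRange_iff (S : H →ₗ.[ℂ] H) :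
    (0 : ℂ) ∈ closure (opNumRange S) ↔
      ∀ ε > (0 : ℝ), ∃ f : S.domain, ‖(f : H)‖ = 1 ∧ ‖⟪(f : H), S f⟫‖ < ε := by
  simp only [Metric.mem_closure_iff, opNumRange, dist_zero_left]
  refine forall₂_congr fun ε _ => ⟨?_, ?_⟩
  · rintro ⟨_, ⟨f, hf, rfl⟩, hlt⟩
    exact ⟨f, hf, hlt⟩
  · rintro ⟨f, hf, hlt⟩
    exact ⟨_, ⟨f, hf, rfl⟩, hlt⟩

theorem Wpsi_eq (Ω : Set ℂ) (T : ℂ → H →ₗ.[ℂ] H) :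
    Wpsi Ω T = {l | l ∈ Ω ∧ (0 : ℂ) ∈ closure (opNumRange (T l))} := by
  ext l
  simp only [Wpsi, Weps_eq, zero_mem_closure_opNumRange_iff, Set.mem_iInter,
    Set.mem_ofPred_eq]
  exact ⟨fun h => ⟨(h 1 one_pos).1, fun ε hε => (h ε hε).2⟩,
    fun h ε hε => ⟨h.1, h.2 ε hε⟩⟩

end

/-- For every `ε > 0`,
`W_ε(T) = {λ ∈ Ω : ∃ f ∈ dom T(λ), ‖f‖ = 1, |⟨T(λ)f, f⟩| < ε}`, and consequently
`W_Ψ(T) = {λ ∈ Ω : 0 ∈ closure (W(T(λ)))}`. -/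
theorem pseudoNumRange_characterization (Ω : Set ℂ) (T : ℂ → H →ₗ.[ℂ] H) :
    (∀ ε > (0 : ℝ), Weps Ω T ε =
      {l | l ∈ Ω ∧ ∃ f : (T l).domain, ‖(f : H)‖ = 1 ∧
        ‖⟪(f : H), (T l) f⟫‖ < ε}) ∧
    Wpsi Ω T = {l | l ∈ Ω ∧ (0 : ℂ) ∈ closure (opNumRange (T l))} :=
  ⟨fun ε _ => Weps_eq Ω T ε, Wpsi_eq Ω T⟩

end
end

section
/- Let n ≥ 1 and let A_0, …, A_n be (possibly unbounded) linear operators in the complex Hilbert space H. Define the operator polynomial T(λ) := Σ_{k=0}^n λ^k A_k with dom T(λ) := ⋂_{k=0}^n dom A_k, for λ ∈ ℂ. If 0 ∉ closure(W(A_n)), then W_Ψ(T) ⊆ closure(W(T)). -/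
/-! For a unit vector `f` in the common domain, `λ ↦ ⟨T(λ)f, f⟩` is a polynomial of degree `n`
whose leading coefficient `⟨A_n f, f⟩` has modulus at least some `δ > 0` independent of `f`, and
all of whose roots lie in `W(T)`. Factoring it over its roots gives
`|⟨T(λ)f, f⟩| ≥ δ · dist(λ, W(T))ⁿ`, so `⟨T(λ)f, f⟩ → 0` forces `λ ∈ closure W(T)`. -/

noncomputable section

variable {H : Type*} [NormedAddCommGroup H] [InnerProductSpace ℂ H] [CompleteSpace H]

local notation "⟪" x ", " y "⟫" => @inner ℂ _ _ x y

namespace Polynomial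

theorem exists_mem_roots_norm_sub_lt {K : Type*} [NormedField K] {p : K[X]}
    (hp : p.Splits) {x : K} {ε : ℝ} (hε : 0 ≤ ε)
    (h : ‖p.eval x‖ < ‖p.leadingCoeff‖ * ε ^ p.natDegree) :
    ∃ r ∈ p.roots, ‖x - r‖ < ε := by
  by_contra! hfar
  have hprod : ε ^ p.natDegree ≤ ‖(p.roots.map (x - ·)).prod‖ := by
    have := Multiset.prod_map_le_prod_map₀ (fun _ ↦ ε) (fun r ↦ ‖x - r‖)
      (fun _ _ ↦ hε) hfar
    rw [Multiset.map_const', Multiset.prod_replicate, ← hp.natDegree_eq_card_roots] at this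
    rw [← normHom_apply, map_multiset_prod, Multiset.map_map]
    exact this
  have := mul_le_mul_of_nonneg_left hprod (norm_nonneg p.leadingCoeff)
  rw [← norm_mul, ← hp.eval_eq_prod_roots] at this
  exact this.not_gt h

variable {R : Type*} [CommSemiring R] [DecidableEq R] {n : ℕ} (v : Fin (n + 1) → R)

theorem eval_ofFn (x : R) : (ofFn (n + 1) v).eval x = ∑ k : Fin (n + 1), x ^ (k : ℕ) * v k := by
  simp [ofFn_eq_sum_monomial, eval_finsetSum, mul_comm]

theorem natDegree_ofFn_of_last_ne_zero (h : v (Fin.last n) ≠ 0) :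
    (ofFn (n + 1) v).natDegree = n :=
  natDegree_eq_of_le_of_coeff_ne_zero (Nat.lt_succ_iff.mp (ofFn_natDegree_lt n.succ_pos v))
    (by rwa [ofFn_coeff_eq_val_of_lt _ n.lt_succ_self])

theorem leadingCoeff_ofFn_of_last_ne_zero (h : v (Fin.last n) ≠ 0) :
    (ofFn (n + 1) v).leadingCoeff = v (Fin.last n) := by
  rw [leadingCoeff, natDegree_ofFn_of_last_ne_zero v h, ofFn_coeff_eq_val_of_lt _ n.lt_succ_self]
  rfl

end Polynomial

theorem exists_pos_le_norm_of_zero_notMem_closure {E : Type*} [SeminormedAddCommGroup E]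
    {s : Set E} (h : (0 : E) ∉ closure s) : ∃ δ > 0, ∀ w ∈ s, δ ≤ ‖w‖ := by
  obtain ⟨δ, hδ, hball⟩ := Metric.isOpen_iff.mp isClosed_closure.isOpen_compl 0 h
  refine ⟨δ, hδ, fun w hw ↦ not_lt.mp fun hlt ↦ hball ?_ (subset_closure hw)⟩
  simpa using hlt

open Polynomial

theorem polynomial_pseudoNumRange_subset_closure_numRange_general
    (n : ℕ) (A : Fin (n + 1) → (H →ₗ.[ℂ] H))
    (hAn : (0 : ℂ) ∉ closure (opNumRange (A (Fin.last n)))) :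
    {l : ℂ | (0 : ℂ) ∈ closure {z : ℂ | ∃ (f : H) (hf : ∀ k, f ∈ (A k).domain),
        ‖f‖ = 1 ∧ z = ∑ k : Fin (n + 1), l ^ (k : ℕ) * ⟪f, (A k) ⟨f, hf k⟩⟫}} ⊆
      closure {l : ℂ | ∃ (f : H) (hf : ∀ k, f ∈ (A k).domain),
        ‖f‖ = 1 ∧ ∑ k : Fin (n + 1), l ^ (k : ℕ) * ⟪f, (A k) ⟨f, hf k⟩⟫ = 0} := by
  intro l hl
  obtain ⟨δ, hδ, hδ_le⟩ := exists_pos_le_norm_of_zero_notMem_closure hAn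
  rw [Set.mem_ofPred_eq, Metric.mem_closure_iff] at hl
  rw [Metric.mem_closure_iff]
  intro ε hε
  obtain ⟨_, ⟨f, hf, hf_norm, rfl⟩, hsmall⟩ := hl (δ * ε ^ n) (by positivity)
  set a : Fin (n + 1) → ℂ := fun k ↦ ⟪f, A k ⟨f, hf k⟩⟫
  have hδ_lead : δ ≤ ‖a (Fin.last n)‖ := hδ_le _ ⟨⟨f, hf _⟩, hf_norm, rfl⟩
  have ha : a (Fin.last n) ≠ 0 := norm_pos_iff.mp (hδ.trans_le hδ_lead)
  have hval_small : ‖(ofFn (n + 1) a).eval l‖ <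
      ‖(ofFn (n + 1) a).leadingCoeff‖ * ε ^ (ofFn (n + 1) a).natDegree := by
    rw [eval_ofFn, leadingCoeff_ofFn_of_last_ne_zero a ha, natDegree_ofFn_of_last_ne_zero a ha]
    rw [dist_zero_left] at hsmall
    exact hsmall.trans_le (by gcongr)
  obtain ⟨r, hr, hlr⟩ := exists_mem_roots_norm_sub_lt (IsAlgClosed.splits _) hε.le hval_small
  refine ⟨r, ⟨f, hf, hf_norm, ?_⟩, by rwa [dist_eq_norm]⟩
  rw [← eval_ofFn]
  exact isRoot_of_mem_roots hr

/-- For the operator polynomial `T(λ) = ∑_{k=0}^n λ^k A_k` with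
`dom T(λ) = ⋂_k dom A_k`: if `0 ∉ closure W(A_n)`, then
`W_Ψ(T) ⊆ closure W(T)`, where `W_Ψ(T) = {λ : 0 ∈ closure {⟨T(λ)f,f⟩ : f ∈ dom T(λ), ‖f‖=1}}`
and `W(T) = {λ : ∃ f ∈ dom T(λ), ‖f‖ = 1, ⟨T(λ)f, f⟩ = 0}`. -/
theorem polynomial_pseudoNumRange_subset_closure_numRange
    (n : ℕ) (hn : 1 ≤ n) (A : Fin (n + 1) → (H →ₗ.[ℂ] H))
    (hAn : (0 : ℂ) ∉ closure (opNumRange (A (Fin.last n)))) :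
    {l : ℂ | (0 : ℂ) ∈ closure {z : ℂ | ∃ (f : H) (hf : ∀ k, f ∈ (A k).domain),
        ‖f‖ = 1 ∧ z = ∑ k : Fin (n + 1), l ^ (k : ℕ) * ⟪f, (A k) ⟨f, hf k⟩⟫}} ⊆
      closure {l : ℂ | ∃ (f : H) (hf : ∀ k, f ∈ (A k).domain),
        ‖f‖ = 1 ∧ ∑ k : Fin (n + 1), l ^ (k : ℕ) * ⟪f, (A k) ⟨f, hf k⟩⟫ = 0} :=
  polynomial_pseudoNumRange_subset_closure_numRange_general n A hAn

end
end

section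
/- Let t be a form function on Ω ⊆ ℂ with constant domain 𝒟 in the complex Hilbert space H such that each t(λ) is sectorial, and assume that for each λ₀ ∈ Ω there exist r > 0, C > 0 and a function w : B_r(λ₀) ∩ Ω → [0, ∞) with w(λ) → 0 as λ → λ₀ such that |t(λ₀)[f] − t(λ)[f]| ≤ w(λ)·(|Re t(λ₀)[f]| + C‖f‖²) for all λ ∈ B_r(λ₀) ∩ Ω and all f ∈ 𝒟. Then closure(W(t)) ∩ Ω ⊆ W_Ψ(t); that is, if λ₀ ∈ Ω is the limit of a sequence of points of W(t), then 0 ∈ closure{t(λ₀)[f] : f ∈ 𝒟, ‖f‖ = 1}. -/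
/-! A zero `t(λ)[f] = 0` with `‖f‖ = 1` and `λ` close to `λ₀` turns the continuity estimate into
`‖t(λ₀)[f]‖ ≤ w(λ)(‖t(λ₀)[f]‖ + C)`, so `‖t(λ₀)[f]‖ ≤ 2 w(λ) C` once `w(λ) ≤ 1/2`. Letting `λ → λ₀`
through `W(t)` produces unit vectors `f` with `t(λ₀)[f] → 0`. -/

open Filter Topology Real

noncomputable section

variable {H : Type*} [NormedAddCommGroup H] [InnerProductSpace ℂ H] [CompleteSpace H]

theorem Complex.norm_le_two_mul_of_norm_le_mul_abs_re_add {z : ℂ} {w C : ℝ} (hw₀ : 0 ≤ w)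
    (hw : w ≤ 1 / 2) (h : ‖z‖ ≤ w * (|z.re| + C)) : ‖z‖ ≤ 2 * w * C := by
  have hre := Complex.abs_re_le_norm z
  nlinarith [norm_nonneg z]

theorem LinearMap.exists_norm_eq_one_apply_self_eq_zero {E : Type*} [NormedAddCommGroup E]
    [NormedSpace ℂ E] (B : E →ₗ[ℂ] E →ₛₗ[starRingEnd ℂ] ℂ) {f : E} (hf : f ≠ 0)
    (hBf : B f f = 0) : ∃ g : E, ‖g‖ = 1 ∧ B g g = 0 :=
  ⟨(‖f‖⁻¹ : ℂ) • f, norm_smul_inv_norm hf, by simp [hBf]⟩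

theorem closure_numRange_subset_pseudoNumRange_of_sectorial_forms_general
    (Ω : Set ℂ) (𝒟 : Submodule ℂ H)
    (t : ℂ → (𝒟 →ₗ[ℂ] (𝒟 →ₛₗ[starRingEnd ℂ] ℂ)))
    (hcont : ∀ l₀ ∈ Ω, ∃ r > (0 : ℝ), ∃ C > (0 : ℝ), ∃ w : ℂ → ℝ,
      (∀ l ∈ Metric.ball l₀ r ∩ Ω, 0 ≤ w l) ∧
      Tendsto w (nhdsWithin l₀ (Metric.ball l₀ r ∩ Ω)) (nhds 0) ∧
      ∀ l ∈ Metric.ball l₀ r ∩ Ω, ∀ f : 𝒟,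
        ‖t l₀ f f - t l f f‖ ≤ w l * (|(t l₀ f f).re| + C * ‖(f : H)‖ ^ 2)) :
    closure {l : ℂ | l ∈ Ω ∧ ∃ f : 𝒟, (f : H) ≠ 0 ∧ t l f f = 0} ∩ Ω ⊆
      {l : ℂ | l ∈ Ω ∧
        (0 : ℂ) ∈ closure {z : ℂ | ∃ f : 𝒟, ‖(f : H)‖ = 1 ∧ t l f f = z}} := by
  set W := {l : ℂ | l ∈ Ω ∧ ∃ f : 𝒟, (f : H) ≠ 0 ∧ t l f f = 0}
  rintro l₀ ⟨hl₀W, hl₀Ω⟩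
  refine ⟨hl₀Ω, ?_⟩
  obtain ⟨r, hr, C, -, w, hw₀, hw, hest⟩ := hcont l₀ hl₀Ω
  have := mem_closure_iff_nhdsWithin_neBot.mp hl₀W
  have hnear : Metric.ball l₀ r ∩ Ω ∈ 𝓝[W] l₀ :=
    inter_mem (mem_nhdsWithin_of_mem_nhds (Metric.ball_mem_nhds l₀ hr))
      (mem_of_superset self_mem_nhdsWithin fun l hl ↦ hl.1)
  have hwW : Tendsto w (𝓝[W] l₀) (𝓝 0) := hw.mono_left (nhdsWithin_le_of_mem hnear)
  have hunit : ∀ l ∈ W, ∃ g : 𝒟, ‖g‖ = 1 ∧ t l g g = 0 := fun l ⟨_, f, hf, hf0⟩ ↦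
    (t l).exists_norm_eq_one_apply_self_eq_zero (by simpa using hf) hf0
  choose! g hg using hunit
  have hsmall : ∀ᶠ l in 𝓝[W] l₀, ‖t l₀ (g l) (g l)‖ ≤ 2 * w l * C := by
    filter_upwards [self_mem_nhdsWithin, hnear, hwW.eventually (eventually_le_nhds one_half_pos)]
      with l hlW hlnear hwl
    have := hest l hlnear (g l)
    rw [(hg l hlW).2, sub_zero, show ‖(g l : H)‖ = 1 from (hg l hlW).1, one_pow, mul_one] at this
    exact Complex.norm_le_two_mul_of_norm_le_mul_abs_re_add (hw₀ l hlnear) hwl this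
  have hlim : Tendsto (fun l ↦ t l₀ (g l) (g l)) (𝓝[W] l₀) (𝓝 0) :=
    squeeze_zero_norm' hsmall (by simpa using (hwW.const_mul 2).mul_const C)
  exact mem_closure_of_tendsto hlim
    (eventually_mem_nhdsWithin.mono fun l hl ↦ ⟨g l, by simpa using (hg l hl).1, rfl⟩)

/-- For a family `t` of sectorial sesquilinear forms (linear in the first,
conjugate-linear in the second argument) with constant domain `𝒟`, satisfying the
continuity assumption
`|t(λ₀)[f] − t(λ)[f]| ≤ w(λ)(|Re t(λ₀)[f]| + C‖f‖²)` near every `λ₀ ∈ Ω` with `w(λ) → 0`,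
one has `closure(W(t)) ∩ Ω ⊆ W_Ψ(t)`, i.e. if `λ₀ ∈ Ω` is in the closure of
`W(t) = {λ ∈ Ω : ∃ f ∈ 𝒟, f ≠ 0, t(λ)[f] = 0}`, then
`0 ∈ closure {t(λ₀)[f] : f ∈ 𝒟, ‖f‖ = 1}`. -/
theorem closure_numRange_subset_pseudoNumRange_of_sectorial_forms
    (Ω : Set ℂ) (𝒟 : Submodule ℂ H)
    (t : ℂ → (𝒟 →ₗ[ℂ] (𝒟 →ₛₗ[starRingEnd ℂ] ℂ)))
    (hsect : ∀ l ∈ Ω, ∃ γ θ : ℝ, 0 ≤ θ ∧ θ < π / 2 ∧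
      ∀ f : 𝒟, ‖(f : H)‖ = 1 → |(t l f f).im| ≤ Real.tan θ * ((t l f f).re - γ))
    (hcont : ∀ l₀ ∈ Ω, ∃ r > (0 : ℝ), ∃ C > (0 : ℝ), ∃ w : ℂ → ℝ,
      (∀ l ∈ Metric.ball l₀ r ∩ Ω, 0 ≤ w l) ∧
      Tendsto w (nhdsWithin l₀ (Metric.ball l₀ r ∩ Ω)) (nhds 0) ∧
      ∀ l ∈ Metric.ball l₀ r ∩ Ω, ∀ f : 𝒟,
        ‖t l₀ f f - t l f f‖ ≤ w l * (|(t l₀ f f).re| + C * ‖(f : H)‖ ^ 2)) :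
    closure {l : ℂ | l ∈ Ω ∧ ∃ f : 𝒟, (f : H) ≠ 0 ∧ t l f f = 0} ∩ Ω ⊆
      {l : ℂ | l ∈ Ω ∧
        (0 : ℂ) ∈ closure {z : ℂ | ∃ f : 𝒟, ‖(f : H)‖ = 1 ∧ t l f f = z}} :=
  closure_numRange_subset_pseudoNumRange_of_sectorial_forms_general Ω 𝒟 t hcont

end
end

section
/- Let T be an operator function on Ω in the complex Hilbert space H. Then: (a) for every ε > 0, σ_{ap,ε}(T) ⊆ W_ε(T); (b) for every ε > 0 and every λ ∈ Ω \ W_ε(T), one has ‖T(λ)f‖ ≥ ε‖f‖ for all f ∈ dom T(λ); (c) σ_ap(T) ⊆ W_Ψ(T). -/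
open Filter Topology

noncomputable section

variable {H : Type*} [NormedAddCommGroup H] [InnerProductSpace ℂ H] [CompleteSpace H]

local notation "⟪" x ", " y "⟫" => @inner ℂ _ _ x y

/-- The `ε`-approximate point spectrum
`σ_{ap,ε}(T) = {λ ∈ Ω : ∃ f ∈ dom T(λ), ‖f‖ = 1, ‖T(λ)f‖ < ε}`. -/
def sigmaApEps (Ω : Set ℂ) (T : ℂ → H →ₗ.[ℂ] H) (ε : ℝ) : Set ℂ :=
  {l | l ∈ Ω ∧ ∃ f : (T l).domain, ‖(f : H)‖ = 1 ∧ ‖(T l) f‖ < ε}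

/-- The approximate point spectrum `σ_ap(T)`. -/
def sigmaAp (Ω : Set ℂ) (T : ℂ → H →ₗ.[ℂ] H) : Set ℂ :=
  {l | l ∈ Ω ∧ ∃ u : ℕ → (T l).domain, (∀ n, ‖(u n : H)‖ = 1) ∧
    Tendsto (fun n => (T l) (u n)) atTop (𝓝 0)}

/-- (a) `σ_{ap,ε}(T) ⊆ W_ε(T)` for all `ε > 0`; (b) for `λ ∈ Ω \ W_ε(T)` one has
`‖T(λ)f‖ ≥ ε‖f‖` on `dom T(λ)`; (c) `σ_ap(T) ⊆ W_Ψ(T)`. -/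
theorem sigmaAp_subset_pseudoNumRange (Ω : Set ℂ) (T : ℂ → H →ₗ.[ℂ] H) :
    (∀ ε > (0 : ℝ), sigmaApEps Ω T ε ⊆ Weps Ω T ε) ∧
    (∀ ε > (0 : ℝ), ∀ l ∈ Ω, l ∉ Weps Ω T ε →
      ∀ f : (T l).domain, ε * ‖(f : H)‖ ≤ ‖(T l) f‖) ∧

    sigmaAp Ω T ⊆ Wpsi Ω T := by
  have key : ∀ ε > (0 : ℝ), sigmaApEps Ω T ε ⊆ Weps Ω T ε := by
    intro ε hε l hl
    obtain ⟨hlΩ, f, hf1, hfε⟩ := hl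
    set B : H →L[ℂ] H :=
      (ContinuousLinearMap.toSpanSingleton ℂ (-((T l) f))).comp (innerSL ℂ (f : H)) with hB
    have hBnorm : ‖B‖ < ε := by
      calc ‖B‖ ≤ ‖ContinuousLinearMap.toSpanSingleton ℂ (-((T l) f))‖ * ‖innerSL ℂ (f : H)‖ :=
            ContinuousLinearMap.opNorm_comp_le _ _
        _ = ‖(T l) f‖ := by
            rw [ContinuousLinearMap.norm_toSpanSingleton, innerSL_apply_norm, norm_neg, hf1,
              mul_one]
        _ < ε := hfε
    have hBf : B (f : H) = -((T l) f) := by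
      simp [hB, ContinuousLinearMap.toSpanSingleton_apply, inner_self_eq_norm_sq_to_K, hf1]
    refine Set.mem_iUnion₂.2 ⟨B, hBnorm, hlΩ, f, hf1, ?_⟩
    have : (pert (T l) B) f = (T l) f + B (f : H) := rfl
    rw [this, hBf, add_neg_cancel, inner_zero_right]
  refine ⟨key, ?_, ?_⟩
  · intro ε hε l hlΩ hl f
    by_contra h
    push_neg at h
    have hf0 : (f : H) ≠ 0 := by
      intro h0
      rw [h0, norm_zero, mul_zero] at h
      exact (norm_nonneg _).not_gt h
    have hfn : ‖(f : H)‖ ≠ 0 := norm_ne_zero_iff.2 hf0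
    set g : (T l).domain := ((‖(f : H)‖⁻¹ : ℝ) : ℂ) • f with hg
    have hg1 : ‖(g : H)‖ = 1 := by
      rw [hg]
      push_cast [Submodule.coe_smul, norm_smul]
      simp [hfn, norm_inv]
    have hTg : (T l) g = ((‖(f : H)‖⁻¹ : ℝ) : ℂ) • (T l) f := by
      rw [hg]; exact (T l).toFun.map_smul _ _
    have hgnorm : ‖(T l) g‖ < ε := by
      rw [hTg, norm_smul]
      simp only [Complex.norm_real, norm_inv, norm_norm]
      rw [inv_mul_lt_iff₀ (lt_of_le_of_ne (norm_nonneg _) (Ne.symm hfn)), mul_comm]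
      exact h
    exact hl (key ε hε ⟨hlΩ, g, hg1, hgnorm⟩)
  · intro l hl
    obtain ⟨hlΩ, u, hu1, hu0⟩ := hl
    refine Set.mem_iInter₂.2 fun ε hε => ?_
    have hnorm : Tendsto (fun n => ‖(T l) (u n)‖) atTop (𝓝 0) := by
      simpa using hu0.norm
    obtain ⟨n, hn⟩ := (hnorm.eventually_lt_const hε).exists
    exact key ε hε ⟨hlΩ, u n, hu1 n, hn⟩

end
end

section
/- Let Ω ⊆ ℂ be open and connected, λ₀, μ ∈ Ω, k ∈ ℕ, and let (φ_n) be a sequence of holomorphic functions on Ω that is uniformly bounded on every compact subset of Ω. Assume φ_n(λ₀) → 0 as n → ∞ and that there is δ > 0 with |φ_n^{(k)}(μ)| ≥ δ for all n. Then there exist a strictly increasing sequence of indices (n_j) and points λ_j ∈ Ω with λ_j → λ₀ and φ_{n_j}(λ_j) = 0 for all j. -/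
/-!
Montel: a locally bounded family of holomorphic functions is equicontinuous by the Schwarz lemma
(Cauchy estimates), so by Arzelà–Ascoli a subsequence `φ (g j)` converges locally uniformly on `Ω`
to a holomorphic `ψ`. The derivatives converge as well, so `ψ(λ₀) = 0` while `ψ^{(k)}(μ) ≠ 0`;
by the identity theorem on the connected set `Ω`, the zero of `ψ` at `λ₀` is isolated. Hurwitz:
on a small circle around `λ₀`, `|ψ|` is bounded below by some `m > 0`, hence `|φ (g j)| ≥ m / 2`
there for large `j` while `|φ (g j) (λ₀)| < m / 2`, and the minimum modulus principle produces a
zero of `φ (g j)` inside the circle. A diagonal extraction over shrinking circles finishes.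
-/

open Filter Metric Set Topology

section ArzelaAscoli

variable {X α : Type*} [TopologicalSpace X]

theorem ContinuousMap.isClosedEmbedding_toUniformOnFunIsCompact [UniformSpace α]
    [CompactlyCoherentSpace X] :
    IsClosedEmbedding (toUniformOnFunIsCompact : C(X, α) → UniformOnFun X α {K | IsCompact K}) :=
  ⟨isUniformEmbedding_toUniformOnFunIsCompact.isEmbedding, by
    rw [range_toUniformOnFunIsCompact]
    exact UniformOnFun.isClosed_setOfPred_continuous CompactlyCoherentSpace.isCoherentWith⟩

theorem ContinuousMap.exists_strictMono_tendsto_of_equicontinuous [WeaklyLocallyCompactSpace X]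
    [SigmaCompactSpace X] [MetricSpace α] [ProperSpace α] (F : ℕ → C(X, α))
    (hF : Equicontinuous fun n ↦ ⇑(F n)) (hb : ∀ x, Bornology.IsBounded (range fun n ↦ F n x)) :
    ∃ g : C(X, α), ∃ φ : ℕ → ℕ, StrictMono φ ∧ Tendsto (F ∘ φ) atTop (𝓝 g) := by
  have hF' : Equicontinuous (DFunLike.coe ∘ ((↑) : range F → C(X, α))) := by
    rwa [equicontinuous_iff_range, range_comp, Subtype.range_coe, ← range_comp,
      ← equicontinuous_iff_range]
  have hcomp : IsCompact (closure (range F)) :=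
    ArzelaAscoli.isCompact_closure_of_isClosedEmbedding (fun _ ↦ id)
      isClosedEmbedding_toUniformOnFunIsCompact (fun K _ ↦ hF'.equicontinuousOn K)
      fun _ _ x _ ↦ ⟨_, (hb x).isCompact_closure, by
        rintro _ ⟨n, rfl⟩; exact subset_closure (mem_range_self n)⟩
  obtain ⟨g, -, φ, hφ, hg⟩ := hcomp.isSeqCompact fun n ↦ subset_closure (mem_range_self n)
  exact ⟨g, φ, hφ, hg⟩

end ArzelaAscoli

theorem Filter.exists_strictMono_tendsto_of_forall_mem_nhds_frequently {X : Type*}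
    [TopologicalSpace X] {x : X} [(𝓝 x).IsCountablyGenerated] {P : ℕ → X → Prop}
    (h : ∀ s ∈ 𝓝 x, ∃ᶠ n in atTop, ∃ z ∈ s, P n z) :
    ∃ idx : ℕ → ℕ, StrictMono idx ∧ ∃ z : ℕ → X, Tendsto z atTop (𝓝 x) ∧ ∀ j, P (idx j) (z j) := by
  obtain ⟨u, hu⟩ := (𝓝 x).exists_antitone_basis
  obtain ⟨idx, hidx, hP⟩ := extraction_forall_of_frequently fun q ↦ h (u q) (hu.mem q)
  choose z hzu hzP using hP
  exact ⟨idx, hidx, z, hu.tendsto hzu, hzP⟩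

section Holomorphic

variable {E F : Type*} [NormedAddCommGroup E] [NormedSpace ℂ E] [NormedAddCommGroup F]
  [NormedSpace ℂ F]

theorem Complex.dist_le_div_mul_dist_of_norm_le {f : E → F} {c z : E} {r M : ℝ}
    (hd : DifferentiableOn ℂ f (ball c r)) (hM : ∀ w ∈ ball c r, ‖f w‖ ≤ M)
    (hz : z ∈ ball c r) : dist (f z) (f c) ≤ 2 * M / r * dist z c := by
  have hc : c ∈ ball c r := mem_ball_self (pos_of_mem_ball hz)
  refine dist_le_div_mul_dist_of_mapsTo_ball hd (fun w hw ↦ ?_) hz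
  rw [mem_closedBall, dist_eq_norm]
  linarith [norm_sub_le (f w) (f c), hM w hw, hM c hc]

variable [ProperSpace E]

theorem Complex.equicontinuous_restrict_of_forall_isCompact_norm_le {ι : Type*} {U : Set E}
    (hU : IsOpen U) {f : ι → E → F} (hf : ∀ i, DifferentiableOn ℂ (f i) U)
    (hbd : ∀ K ⊆ U, IsCompact K → ∃ M, ∀ i, ∀ z ∈ K, ‖f i z‖ ≤ M) :
    Equicontinuous fun i (x : U) ↦ f i x := by
  rintro ⟨x, hx⟩
  obtain ⟨r, hr, hrU⟩ := nhds_basis_closedBall.mem_iff.1 (hU.mem_nhds hx)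
  obtain ⟨M, hM⟩ := hbd _ hrU (isCompact_closedBall x r)
  refine equicontinuousAt_of_continuity_modulus (fun y : U ↦ 2 * M / r * dist (y : E) x) ?_ _ ?_
  · simpa using ((continuous_subtype_val.dist (continuous_const (y := x))).tendsto
      (⟨x, hx⟩ : U)).const_mul (2 * M / r)
  · filter_upwards [continuous_subtype_val.continuousAt.preimage_mem_nhds (ball_mem_nhds x hr)]
      with y hy i
    rw [dist_comm]
    exact dist_le_div_mul_dist_of_norm_le ((hf i).mono (ball_subset_closedBall.trans hrU))
      (fun w hw ↦ hM i w (ball_subset_closedBall hw)) hy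

theorem Complex.exists_strictMono_tendstoLocallyUniformlyOn [ProperSpace F] {U : Set E}
    (hU : IsOpen U) {f : ℕ → E → F} (hf : ∀ n, DifferentiableOn ℂ (f n) U)
    (hbd : ∀ K ⊆ U, IsCompact K → ∃ M, ∀ n, ∀ z ∈ K, ‖f n z‖ ≤ M) :
    ∃ g : E → F, ∃ φ : ℕ → ℕ, StrictMono φ ∧
      TendstoLocallyUniformlyOn (fun j ↦ f (φ j)) g atTop U := by
  have := hU.locallyCompactSpace
  let f' (n : ℕ) : C(U, F) := ⟨U.domRestrict (f n), (hf n).continuousOn.domRestrict⟩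
  have hb (x : U) : Bornology.IsBounded (range fun n ↦ f' n x) := by
    obtain ⟨M, hM⟩ := hbd {(x : E)} (singleton_subset_iff.2 x.2) isCompact_singleton
    exact isBounded_iff_forall_norm_le.2 ⟨M, by rintro _ ⟨n, rfl⟩; exact hM n x rfl⟩
  obtain ⟨g, φ, hφ, hg⟩ := ContinuousMap.exists_strictMono_tendsto_of_equicontinuous f'
    (equicontinuous_restrict_of_forall_isCompact_norm_le hU hf hbd) hb
  refine ⟨Function.extend Subtype.val g 0, φ, hφ, ?_⟩
  rw [tendstoLocallyUniformlyOn_iff_tendstoLocallyUniformly_comp_coe,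
    Function.extend_comp Subtype.val_injective]
  exact ContinuousMap.tendsto_iff_tendstoLocallyUniformly.1 hg

end Holomorphic

theorem DiffContOnCl.exists_mem_ball_eq_zero {f : ℂ → ℂ} {c : ℂ} {r m : ℝ}
    (hf : DiffContOnCl ℂ f (ball c r)) (hr : 0 < r)
    (hc : ‖f c‖ < m) (hm : ∀ z ∈ sphere c r, m ≤ ‖f z‖) : ∃ z ∈ ball c r, f z = 0 := by
  by_contra! h
  have hne : ∀ z ∈ closedBall c r, f z ≠ 0 := by
    rw [← ball_union_sphere]
    rintro z (hz | hz) hfz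
    · exact h z hz hfz
    · linarith [hm z hz, norm_nonneg (f c), norm_eq_zero.2 hfz]
  -- the maximum modulus principle for `1 / f` is the minimum modulus principle for `f`
  have hinv : DiffContOnCl ℂ (fun z ↦ (f z)⁻¹) (ball c r) :=
    hf.inv fun z hz ↦ hne z (closure_ball_subset_closedBall hz)
  have hcm : ‖(f c)⁻¹‖ ≤ m⁻¹ := by
    refine Complex.norm_le_of_forall_mem_frontier_norm_le isBounded_ball hinv (fun z hz ↦ ?_)
      (subset_closure (mem_ball_self hr))
    rw [frontier_ball c hr.ne'] at hz
    rw [norm_inv]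
    exact inv_anti₀ ((norm_nonneg _).trans_lt hc) (hm z hz)
  rw [norm_inv, inv_le_inv₀ (norm_pos_iff.2 (hne c (mem_closedBall_self hr.le)))
    ((norm_nonneg _).trans_lt hc)] at hcm
  exact hcm.not_gt hc

theorem TendstoLocallyUniformlyOn.eventually_exists_zero {ι : Type*} {l : Filter ι} [l.NeBot]
    {F : ι → ℂ → ℂ} {f : ℂ → ℂ} {U : Set ℂ} {z₀ : ℂ} (hf : TendstoLocallyUniformlyOn F f l U)
    (hF : ∀ᶠ i in l, DifferentiableOn ℂ (F i) U) (hU : IsOpen U) (hz₀ : z₀ ∈ U) (hf₀ : f z₀ = 0)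
    (hiso : ∀ᶠ z in 𝓝[≠] z₀, f z ≠ 0) {s : Set ℂ} (hs : s ∈ 𝓝 z₀) :
    ∀ᶠ i in l, ∃ z ∈ s, F i z = 0 := by
  obtain ⟨r, hr, hrU, hrs, hrf⟩ : ∃ r > 0, closedBall z₀ r ⊆ U ∧ closedBall z₀ r ⊆ s ∧
      closedBall z₀ r ⊆ {z | z ≠ z₀ → f z ≠ 0} := by
    simpa only [subset_inter_iff, mem_compl_singleton_iff] using nhds_basis_closedBall.mem_iff.1
      (inter_mem (hU.mem_nhds hz₀) (inter_mem hs (eventually_nhdsWithin_iff.1 hiso)))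
  have hsphere : sphere z₀ r ⊆ U := sphere_subset_closedBall.trans hrU
  obtain ⟨m, hm, hfm⟩ := (isCompact_sphere z₀ r).exists_forall_le' (f := fun z ↦ ‖f z‖) (a := 0)
    ((hf.differentiableOn hF hU).continuousOn.mono hsphere).norm
    fun z hz ↦ norm_pos_iff.2 (hrf (sphere_subset_closedBall hz) (ne_of_mem_sphere hz hr.ne'))
  have hunif : TendstoUniformlyOn F f l (sphere z₀ r) :=
    (tendstoLocallyUniformlyOn_iff_forall_isCompact hU).1 hf _ hsphere (isCompact_sphere z₀ r)
  have hcenter : Tendsto (fun i ↦ F i z₀) l (𝓝 0) := hf₀ ▸ hf.tendsto_at hz₀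
  filter_upwards [hF, Metric.tendstoUniformlyOn_iff.1 hunif (m / 2) (half_pos hm),
    hcenter (ball_mem_nhds 0 (half_pos hm))] with i hFi hFf hFz₀
  obtain ⟨z, hz, hFz⟩ := DiffContOnCl.exists_mem_ball_eq_zero (m := m / 2)
    ((hFi.mono hrU).diffContOnCl_ball subset_rfl) hr (by simpa using hFz₀) fun z hz ↦ by
      linarith [hfm z hz, hFf z hz, norm_sub_norm_le (f z) (F i z), dist_eq_norm (f z) (F i z)]
  exact ⟨z, hrs (ball_subset_closedBall hz), hFz⟩

theorem TendstoLocallyUniformlyOn.iteratedDeriv {ι E : Type*} [NormedAddCommGroup E]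
    [NormedSpace ℂ E] [CompleteSpace E] {l : Filter ι} {F : ι → ℂ → E} {f : ℂ → E} {U : Set ℂ}
    (hf : TendstoLocallyUniformlyOn F f l U) (hF : ∀ᶠ i in l, DifferentiableOn ℂ (F i) U)
    (hU : IsOpen U) (k : ℕ) :
    TendstoLocallyUniformlyOn (fun i ↦ iteratedDeriv k (F i)) (iteratedDeriv k f) l U := by
  induction k generalizing F f with
  | zero => simpa only [iteratedDeriv_zero] using hf
  | succ k ih =>
    simp only [iteratedDeriv_succ']
    exact ih (hf.deriv hF hU) (hF.mono fun _ hi ↦ hi.deriv hU)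

theorem AnalyticOnNhd.eventually_ne_zero_of_iteratedDeriv_ne_zero {𝕜 E : Type*}
    [NontriviallyNormedField 𝕜] [NormedAddCommGroup E] [NormedSpace 𝕜 E] {f : 𝕜 → E}
    {U : Set 𝕜} {z₀ μ : 𝕜} {k : ℕ} (hf : AnalyticOnNhd 𝕜 f U) (hUo : IsOpen U)
    (hUc : IsPreconnected U) (hz₀ : z₀ ∈ U) (hμ : μ ∈ U) (hk : iteratedDeriv k f μ ≠ 0) :
    ∀ᶠ z in 𝓝[≠] z₀, f z ≠ 0 := by
  rw [← not_frequently]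
  intro h
  have hμ0 : f =ᶠ[𝓝 μ] 0 := mem_of_superset (hUo.mem_nhds hμ)
    (hf.eqOn_zero_of_preconnected_of_frequently_eq_zero hUc hz₀ h)
  exact hk (by rw [hμ0.iteratedDeriv_eq, iteratedDeriv_const_zero])

/-- Montel–Hurwitz: if `(φ_n)` is a sequence of holomorphic functions on the open connected
set `Ω`, uniformly bounded on compact subsets of `Ω`, with `φ_n(λ₀) → 0` and
`|φ_n^{(k)}(μ)| ≥ δ > 0` for all `n`, then some subsequence `(φ_{n_j})` has zeros
`λ_j ∈ Ω` with `λ_j → λ₀`. -/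
theorem montel_hurwitz_zeros
    (Ω : Set ℂ) (hΩo : IsOpen Ω) (hΩc : IsConnected Ω)
    (φ : ℕ → ℂ → ℂ) (hhol : ∀ n, ∀ z ∈ Ω, DifferentiableAt ℂ (φ n) z)
    (hbd : ∀ K ⊆ Ω, IsCompact K → ∃ M : ℝ, ∀ n, ∀ z ∈ K, ‖φ n z‖ ≤ M)
    (lam₀ μ : ℂ) (hlam₀ : lam₀ ∈ Ω) (hμ : μ ∈ Ω)
    (k : ℕ) (δ : ℝ) (hδ : 0 < δ)
    (hlim : Tendsto (fun n => φ n lam₀) atTop (𝓝 0))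
    (hder : ∀ n, δ ≤ ‖iteratedDeriv k (φ n) μ‖) :
    ∃ idx : ℕ → ℕ, StrictMono idx ∧ ∃ lam : ℕ → ℂ, (∀ j, lam j ∈ Ω) ∧
      Tendsto lam atTop (𝓝 lam₀) ∧ ∀ j, φ (idx j) (lam j) = 0 := by
  have hφ (n : ℕ) : DifferentiableOn ℂ (φ n) Ω := fun z hz ↦ (hhol n z hz).differentiableWithinAt
  obtain ⟨ψ, g, hg, hφψ⟩ := Complex.exists_strictMono_tendstoLocallyUniformlyOn hΩo hφ hbd
  have hφg : ∀ᶠ j in atTop, DifferentiableOn ℂ (φ (g j)) Ω := .of_forall fun j ↦ hφ (g j)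
  have hψlam₀ : ψ lam₀ = 0 :=
    tendsto_nhds_unique (hφψ.tendsto_at hlam₀) (hlim.comp hg.tendsto_atTop)
  have hψμ : iteratedDeriv k ψ μ ≠ 0 := by
    have hlimμ := ((hφψ.iteratedDeriv hφg hΩo k).tendsto_at hμ).norm
    exact norm_pos_iff.1 (hδ.trans_le (ge_of_tendsto hlimμ (.of_forall fun j ↦ hder (g j))))
  have hiso : ∀ᶠ z in 𝓝[≠] lam₀, ψ z ≠ 0 :=
    ((hφψ.differentiableOn hφg hΩo).analyticOnNhd hΩo).eventually_ne_zero_of_iteratedDeriv_ne_zero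
      hΩo hΩc.isPreconnected hlam₀ hμ hψμ
  have hzeros (s : Set ℂ) (hs : s ∈ 𝓝 lam₀) : ∃ᶠ n in atTop, ∃ z ∈ s, z ∈ Ω ∧ φ n z = 0 := by
    have hsΩ := inter_mem hs (hΩo.mem_nhds hlam₀)
    refine hg.tendsto_atTop.frequently (Eventually.frequently ?_)
    filter_upwards [hφψ.eventually_exists_zero hφg hΩo hlam₀ hψlam₀ hiso hsΩ]
      with j ⟨z, ⟨hzs, hzΩ⟩, hz⟩ using ⟨z, hzs, hzΩ, hz⟩
  obtain ⟨idx, hidx, lam, hlam, hzero⟩ :=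
    exists_strictMono_tendsto_of_forall_mem_nhds_frequently hzeros
  exact ⟨idx, hidx, lam, fun j ↦ (hzero j).1, hlam, fun j ↦ (hzero j).2⟩
end

section
/- Let L be a 2×2 operator matrix function on Ω in H = H₁ ⊕ H₂. Define W²_{Ψ,1}(L) := ⋂_{ε>0} {λ ∈ Ω : ∃ f ∈ D₁(λ), g ∈ D₂(λ), ‖f‖ = ‖g‖ = 1, |det L(λ)_{(f,g)}| < ε}; W²(L(λ)) := {z ∈ ℂ : ∃ f ∈ D₁(λ), g ∈ D₂(λ), ‖f‖ = ‖g‖ = 1, det(L(λ)_{(f,g)} − z·I₂) = 0} and W²_{Ψ,0}(L) := {λ ∈ Ω : 0 ∈ closure W²(L(λ))}. Then W²(L) ⊆ W²_{Ψ,1}(L) ⊆ W²_{Ψ,0}(L) ⊆ W²_{Ψ,2}(L) ⊆ W²_Ψ(L). -/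
open Filter Topology

noncomputable section

variable {H₁ H₂ : Type*}
  [NormedAddCommGroup H₁] [InnerProductSpace ℂ H₁] [CompleteSpace H₁]
  [NormedAddCommGroup H₂] [InnerProductSpace ℂ H₂] [CompleteSpace H₂]

local notation "⟪" x ", " y "⟫" => @inner ℂ _ _ x y

/-- First diagonal block component `𝓑₁₁ f = P₁ 𝓑 (f, 0)` of a bounded operator on
the Hilbert space direct sum `H₁ ⊕ H₂`. -/
def blk11 (𝓑 : WithLp 2 (H₁ × H₂) →L[ℂ] WithLp 2 (H₁ × H₂)) (f : H₁) : H₁ :=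
  ((WithLp.equiv 2 (H₁ × H₂)) (𝓑 ((WithLp.equiv 2 (H₁ × H₂)).symm (f, 0)))).1

/-- Block component `𝓑₂₁ f = P₂ 𝓑 (f, 0)`. -/
def blk21 (𝓑 : WithLp 2 (H₁ × H₂) →L[ℂ] WithLp 2 (H₁ × H₂)) (f : H₁) : H₂ :=
  ((WithLp.equiv 2 (H₁ × H₂)) (𝓑 ((WithLp.equiv 2 (H₁ × H₂)).symm (f, 0)))).2

/-- Block component `𝓑₁₂ g = P₁ 𝓑 (0, g)`. -/
def blk12 (𝓑 : WithLp 2 (H₁ × H₂) →L[ℂ] WithLp 2 (H₁ × H₂)) (g : H₂) : H₁ :=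
  ((WithLp.equiv 2 (H₁ × H₂)) (𝓑 ((WithLp.equiv 2 (H₁ × H₂)).symm (0, g)))).1

/-- Block component `𝓑₂₂ g = P₂ 𝓑 (0, g)`. -/
def blk22 (𝓑 : WithLp 2 (H₁ × H₂) →L[ℂ] WithLp 2 (H₁ × H₂)) (g : H₂) : H₂ :=
  ((WithLp.equiv 2 (H₁ × H₂)) (𝓑 ((WithLp.equiv 2 (H₁ × H₂)).symm (0, g)))).2

/-- The quadratic numerical range `W²(L)` of the 2×2 operator matrix function with
entries `A(λ), B(λ), C(λ), D(λ)` on `Ω`. -/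
def qnr (Ω : Set ℂ) (A : ℂ → H₁ →ₗ.[ℂ] H₁) (B : ℂ → H₂ →ₗ.[ℂ] H₁)
    (C : ℂ → H₁ →ₗ.[ℂ] H₂) (D : ℂ → H₂ →ₗ.[ℂ] H₂) : Set ℂ :=
  {l | l ∈ Ω ∧ ∃ (f : H₁) (g : H₂) (hfA : f ∈ (A l).domain) (hfC : f ∈ (C l).domain)
    (hgB : g ∈ (B l).domain) (hgD : g ∈ (D l).domain), ‖f‖ = 1 ∧ ‖g‖ = 1 ∧
    ⟪f, (A l) ⟨f, hfA⟩⟫ * ⟪g, (D l) ⟨g, hgD⟩⟫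
      - ⟪f, (B l) ⟨g, hgB⟩⟫ * ⟪g, (C l) ⟨f, hfC⟩⟫ = 0}

/-- `W²(L + 𝓑)` for a bounded perturbation `𝓑` of the whole matrix. -/
def qnrPert (Ω : Set ℂ) (A : ℂ → H₁ →ₗ.[ℂ] H₁) (B : ℂ → H₂ →ₗ.[ℂ] H₁)
    (C : ℂ → H₁ →ₗ.[ℂ] H₂) (D : ℂ → H₂ →ₗ.[ℂ] H₂)
    (𝓑 : WithLp 2 (H₁ × H₂) →L[ℂ] WithLp 2 (H₁ × H₂)) : Set ℂ :=
  {l | l ∈ Ω ∧ ∃ (f : H₁) (g : H₂) (hfA : f ∈ (A l).domain) (hfC : f ∈ (C l).domain)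
    (hgB : g ∈ (B l).domain) (hgD : g ∈ (D l).domain), ‖f‖ = 1 ∧ ‖g‖ = 1 ∧
    ⟪f, (A l) ⟨f, hfA⟩ + blk11 𝓑 f⟫ * ⟪g, (D l) ⟨g, hgD⟩ + blk22 𝓑 g⟫
      - ⟪f, (B l) ⟨g, hgB⟩ + blk12 𝓑 g⟫ * ⟪g, (C l) ⟨f, hfC⟩ + blk21 𝓑 f⟫ = 0}

/-- `W²_ε(L) = ⋃_{‖𝓑‖<ε} W²(L + 𝓑)`. -/
def qnrEps (Ω : Set ℂ) (A : ℂ → H₁ →ₗ.[ℂ] H₁) (B : ℂ → H₂ →ₗ.[ℂ] H₁)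
    (C : ℂ → H₁ →ₗ.[ℂ] H₂) (D : ℂ → H₂ →ₗ.[ℂ] H₂) (ε : ℝ) : Set ℂ :=
  ⋃ (𝓑 : WithLp 2 (H₁ × H₂) →L[ℂ] WithLp 2 (H₁ × H₂)) (_ : ‖𝓑‖ < ε),
    qnrPert Ω A B C D 𝓑

/-- The pseudo quadratic numerical range `W²_Ψ(L) = ⋂_{ε>0} W²_ε(L)`. -/
def qnrPsi (Ω : Set ℂ) (A : ℂ → H₁ →ₗ.[ℂ] H₁) (B : ℂ → H₂ →ₗ.[ℂ] H₁)
    (C : ℂ → H₁ →ₗ.[ℂ] H₂) (D : ℂ → H₂ →ₗ.[ℂ] H₂) : Set ℂ :=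
  ⋂ ε > (0 : ℝ), qnrEps Ω A B C D ε

/-- `W²(L + diag(B₁, B₂))` for bounded diagonal perturbations. -/
def qnrDiag (Ω : Set ℂ) (A : ℂ → H₁ →ₗ.[ℂ] H₁) (B : ℂ → H₂ →ₗ.[ℂ] H₁)
    (C : ℂ → H₁ →ₗ.[ℂ] H₂) (D : ℂ → H₂ →ₗ.[ℂ] H₂)
    (B₁ : H₁ →L[ℂ] H₁) (B₂ : H₂ →L[ℂ] H₂) : Set ℂ :=
  {l | l ∈ Ω ∧ ∃ (f : H₁) (g : H₂) (hfA : f ∈ (A l).domain) (hfC : f ∈ (C l).domain)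
    (hgB : g ∈ (B l).domain) (hgD : g ∈ (D l).domain), ‖f‖ = 1 ∧ ‖g‖ = 1 ∧
    ⟪f, (A l) ⟨f, hfA⟩ + B₁ f⟫ * ⟪g, (D l) ⟨g, hgD⟩ + B₂ g⟫
      - ⟪f, (B l) ⟨g, hgB⟩⟫ * ⟪g, (C l) ⟨f, hfC⟩⟫ = 0}

/-- `W²_{Ψ,2}(L) = ⋂_{ε>0} ⋃_{‖B₁‖<ε, ‖B₂‖<ε} W²(L + diag(B₁, B₂))`. -/
def qnrPsi2 (Ω : Set ℂ) (A : ℂ → H₁ →ₗ.[ℂ] H₁) (B : ℂ → H₂ →ₗ.[ℂ] H₁)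
    (C : ℂ → H₁ →ₗ.[ℂ] H₂) (D : ℂ → H₂ →ₗ.[ℂ] H₂) : Set ℂ :=
  ⋂ ε > (0 : ℝ), ⋃ (B₁ : H₁ →L[ℂ] H₁) (B₂ : H₂ →L[ℂ] H₂)
    (_ : ‖B₁‖ < ε ∧ ‖B₂‖ < ε), qnrDiag Ω A B C D B₁ B₂

/-- The quadratic numerical range `W²(L(λ))` of the single operator matrix `L(λ)`:
the set of `z` such that `det(L(λ)_{(f,g)} − z·I₂) = 0` for some unit `f, g`. -/
def qnrAt (Ω : Set ℂ) (A : ℂ → H₁ →ₗ.[ℂ] H₁) (B : ℂ → H₂ →ₗ.[ℂ] H₁)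
    (C : ℂ → H₁ →ₗ.[ℂ] H₂) (D : ℂ → H₂ →ₗ.[ℂ] H₂) (l : ℂ) : Set ℂ :=
  {z | ∃ (f : H₁) (g : H₂) (hfA : f ∈ (A l).domain) (hfC : f ∈ (C l).domain)
    (hgB : g ∈ (B l).domain) (hgD : g ∈ (D l).domain), ‖f‖ = 1 ∧ ‖g‖ = 1 ∧
    (⟪f, (A l) ⟨f, hfA⟩⟫ - z) * (⟪g, (D l) ⟨g, hgD⟩⟫ - z)
      - ⟪f, (B l) ⟨g, hgB⟩⟫ * ⟪g, (C l) ⟨f, hfC⟩⟫ = 0}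

/-- `W²_{Ψ,1}(L) = ⋂_{ε>0} {λ ∈ Ω : |det L(λ)_{(f,g)}| < ε for some unit f, g}`. -/
def qnrPsi1 (Ω : Set ℂ) (A : ℂ → H₁ →ₗ.[ℂ] H₁) (B : ℂ → H₂ →ₗ.[ℂ] H₁)
    (C : ℂ → H₁ →ₗ.[ℂ] H₂) (D : ℂ → H₂ →ₗ.[ℂ] H₂) : Set ℂ :=
  ⋂ ε > (0 : ℝ), {l | l ∈ Ω ∧ ∃ (f : H₁) (g : H₂) (hfA : f ∈ (A l).domain)
    (hfC : f ∈ (C l).domain) (hgB : g ∈ (B l).domain) (hgD : g ∈ (D l).domain),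
    ‖f‖ = 1 ∧ ‖g‖ = 1 ∧
    ‖(⟪f, (A l) ⟨f, hfA⟩⟫ * ⟪g, (D l) ⟨g, hgD⟩⟫
      - ⟪f, (B l) ⟨g, hgB⟩⟫ * ⟪g, (C l) ⟨f, hfC⟩⟫)‖ < ε}

/-- `W²_{Ψ,0}(L) = {λ ∈ Ω : 0 ∈ closure W²(L(λ))}`. -/
def qnrPsi0 (Ω : Set ℂ) (A : ℂ → H₁ →ₗ.[ℂ] H₁) (B : ℂ → H₂ →ₗ.[ℂ] H₁)
    (C : ℂ → H₁ →ₗ.[ℂ] H₂) (D : ℂ → H₂ →ₗ.[ℂ] H₂) : Set ℂ :=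
  {l | l ∈ Ω ∧ (0 : ℂ) ∈ closure (qnrAt Ω A B C D l)}

/-!
A unit pair `(f, g)` with `|det L(λ)_{(f,g)}| < ε²` gives a point of `W²(L(λ))` of modulus `< ε`:
the two roots `z` of `det(L(λ)_{(f,g)} − z) = 0` have product `det L(λ)_{(f,g)}`, so the smaller
one will do. A point `z ∈ W²(L(λ))` with `|z| < ε` puts `λ` into `W²(L + diag(−z, −z))`, and
`diag(B₁, B₂)` is a perturbation of `L` of norm at most `max(‖B₁‖, ‖B₂‖)` with vanishing
off-diagonal blocks.
-/

lemma exists_root_sq_norm_le_norm_det (a b c d : ℂ) :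
    ∃ z : ℂ, (a - z) * (d - z) - b * c = 0 ∧ ‖z‖ ^ 2 ≤ ‖a * d - b * c‖ := by
  obtain ⟨δ, hδ⟩ := IsAlgClosed.exists_pow_nat_eq ((a + d) ^ 2 - 4 * (a * d - b * c)) two_pos
  have root {s : ℂ} (hs : s ^ 2 = (a + d) ^ 2 - 4 * (a * d - b * c)) :
      (a - (a + d + s) / 2) * (d - (a + d + s) / 2) - b * c = 0 := by
    linear_combination (1 / 4 : ℂ) * hs
  have prod_roots : (a + d + δ) / 2 * ((a + d + -δ) / 2) = a * d - b * c := by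
    linear_combination (-1 / 4 : ℂ) * hδ
  rw [← prod_roots, norm_mul]
  rcases le_total ‖(a + d + δ) / 2‖ ‖(a + d + -δ) / 2‖ with h | h
  · exact ⟨_, root hδ, by
      rw [sq]; exact mul_le_mul_of_nonneg_left h (norm_nonneg _)⟩
  · exact ⟨_, root ((neg_sq δ).trans hδ), by
      rw [sq]; exact mul_le_mul_of_nonneg_right h (norm_nonneg _)⟩

lemma norm_smul_id_le {E : Type*} [SeminormedAddCommGroup E] [NormedSpace ℂ E] (z : ℂ) :
    ‖z • ContinuousLinearMap.id ℂ E‖ ≤ ‖z‖ := by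
  rw [norm_smul]
  exact mul_le_of_le_one_right (norm_nonneg _) ContinuousLinearMap.norm_id_le

lemma inner_add_smul_self_of_norm_eq_one {E : Type*} [NormedAddCommGroup E]
    [InnerProductSpace ℂ E] {f : E} (hf : ‖f‖ = 1) (x : E) (z : ℂ) :
    ⟪f, x + z • f⟫ = ⟪f, x⟫ + z := by
  rw [inner_add_right, inner_smul_right, inner_self_eq_norm_sq_to_K, hf]
  simp

namespace ContinuousLinearMap

variable {𝕜 E E' F F' : Type*} [NontriviallyNormedField 𝕜]
  [SeminormedAddCommGroup E] [NormedSpace 𝕜 E] [SeminormedAddCommGroup E'] [NormedSpace 𝕜 E']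
  [SeminormedAddCommGroup F] [NormedSpace 𝕜 F] [SeminormedAddCommGroup F'] [NormedSpace 𝕜 F']

def withLpProdMap (S₁ : E →L[𝕜] E') (S₂ : F →L[𝕜] F') :
    WithLp 2 (E × F) →L[𝕜] WithLp 2 (E' × F') :=
  (WithLp.prodContinuousLinearEquiv 2 𝕜 E' F').symm.toContinuousLinearMap ∘L S₁.prodMap S₂ ∘L
    (WithLp.prodContinuousLinearEquiv 2 𝕜 E F).toContinuousLinearMap

@[simp]
lemma withLpProdMap_apply (S₁ : E →L[𝕜] E') (S₂ : F →L[𝕜] F') (x : WithLp 2 (E × F)) :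
    S₁.withLpProdMap S₂ x = WithLp.toLp 2 (S₁ x.fst, S₂ x.snd) :=
  rfl

lemma norm_withLpProdMap_le (S₁ : E →L[𝕜] E') (S₂ : F →L[𝕜] F') :
    ‖S₁.withLpProdMap S₂‖ ≤ max ‖S₁‖ ‖S₂‖ := by
  set M := max ‖S₁‖ ‖S₂‖
  have hM : 0 ≤ M := (norm_nonneg _).trans (le_max_left _ _)
  refine opNorm_le_bound _ hM fun x => ?_
  refine (pow_le_pow_iff_left₀ (norm_nonneg _) (by positivity) two_ne_zero).1 ?_
  calc ‖S₁.withLpProdMap S₂ x‖ ^ 2 = ‖S₁ x.fst‖ ^ 2 + ‖S₂ x.snd‖ ^ 2 :=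
        WithLp.prod_norm_sq_eq_of_L2 _
    _ ≤ (M * ‖x.fst‖) ^ 2 + (M * ‖x.snd‖) ^ 2 := by
        gcongr
        · exact S₁.le_of_opNorm_le (le_max_left _ _) _
        · exact S₂.le_of_opNorm_le (le_max_right _ _) _
    _ = (M * ‖x‖) ^ 2 := by rw [mul_pow M ‖x‖, WithLp.prod_norm_sq_eq_of_L2 x]; ring

end ContinuousLinearMap

section

variable {E₁ E₂ : Type*} [NormedAddCommGroup E₁] [InnerProductSpace ℂ E₁]
  [NormedAddCommGroup E₂] [InnerProductSpace ℂ E₂]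
  {Ω : Set ℂ} {A : ℂ → E₁ →ₗ.[ℂ] E₁} {B : ℂ → E₂ →ₗ.[ℂ] E₁}
  {C : ℂ → E₁ →ₗ.[ℂ] E₂} {D : ℂ → E₂ →ₗ.[ℂ] E₂}

lemma qnrPert_withLpProdMap (S₁ : E₁ →L[ℂ] E₁) (S₂ : E₂ →L[ℂ] E₂) :
    qnrPert Ω A B C D (S₁.withLpProdMap S₂) = qnrDiag Ω A B C D S₁ S₂ := by
  simp [qnrPert, qnrDiag, blk11, blk12, blk21, blk22]

lemma mem_qnrDiag_smul_id_of_mem_qnrAt {l z : ℂ} (hl : l ∈ Ω) (hz : z ∈ qnrAt Ω A B C D l) :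
    l ∈ qnrDiag Ω A B C D ((-z) • ContinuousLinearMap.id ℂ E₁)
      ((-z) • ContinuousLinearMap.id ℂ E₂) := by
  obtain ⟨f, g, hfA, hfC, hgB, hgD, hf, hg, hdet⟩ := hz
  refine ⟨hl, f, g, hfA, hfC, hgB, hgD, hf, hg, ?_⟩
  simpa only [smul_apply, ContinuousLinearMap.id_apply,
    inner_add_smul_self_of_norm_eq_one hf, inner_add_smul_self_of_norm_eq_one hg,
    ← sub_eq_add_neg] using hdet

lemma qnr_subset_qnrPsi1 : qnr Ω A B C D ⊆ qnrPsi1 Ω A B C D := by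
  rintro l ⟨hl, f, g, hfA, hfC, hgB, hgD, hf, hg, hdet⟩
  refine Set.mem_iInter₂.2 fun ε hε => ⟨hl, f, g, hfA, hfC, hgB, hgD, hf, hg, ?_⟩
  rwa [hdet, norm_zero]

lemma qnrPsi1_subset_qnrPsi0 : qnrPsi1 Ω A B C D ⊆ qnrPsi0 Ω A B C D := by
  intro l hl
  replace hl := Set.mem_iInter₂.1 hl
  refine ⟨(hl 1 one_pos).1, Metric.mem_closure_iff.2 fun ε hε => ?_⟩
  obtain ⟨-, f, g, hfA, hfC, hgB, hgD, hf, hg, hdet⟩ := hl (ε ^ 2) (by positivity)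
  obtain ⟨z, hz, hz_sq⟩ := exists_root_sq_norm_le_norm_det ⟪f, (A l) ⟨f, hfA⟩⟫
    ⟪f, (B l) ⟨g, hgB⟩⟫ ⟪g, (C l) ⟨f, hfC⟩⟫ ⟪g, (D l) ⟨g, hgD⟩⟫
  refine ⟨z, ⟨f, g, hfA, hfC, hgB, hgD, hf, hg, hz⟩, ?_⟩
  rw [dist_zero_left]
  exact lt_of_pow_lt_pow_left₀ 2 hε.le (hz_sq.trans_lt hdet)

lemma qnrPsi0_subset_qnrPsi2 : qnrPsi0 Ω A B C D ⊆ qnrPsi2 Ω A B C D := by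
  rintro l ⟨hl, h0⟩
  refine Set.mem_iInter₂.2 fun ε hε => ?_
  obtain ⟨z, hz, hzε⟩ := Metric.mem_closure_iff.1 h0 ε hε
  rw [dist_zero_left, ← norm_neg] at hzε
  simp only [Set.mem_iUnion]
  exact ⟨_, _, ⟨(norm_smul_id_le _).trans_lt hzε, (norm_smul_id_le _).trans_lt hzε⟩,
    mem_qnrDiag_smul_id_of_mem_qnrAt hl hz⟩

lemma qnrPsi2_subset_qnrPsi : qnrPsi2 Ω A B C D ⊆ qnrPsi Ω A B C D := by
  intro l hl
  refine Set.mem_iInter₂.2 fun ε hε => ?_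
  obtain ⟨S₁, S₂, ⟨hS₁, hS₂⟩, hlS⟩ := by
    simpa only [Set.mem_iUnion] using Set.mem_iInter₂.1 hl ε hε
  simp only [qnrEps, Set.mem_iUnion]
  exact ⟨S₁.withLpProdMap S₂, (S₁.norm_withLpProdMap_le S₂).trans_lt (max_lt hS₁ hS₂),
    (qnrPert_withLpProdMap S₁ S₂).symm ▸ hlS⟩

end

/-- `W²(L) ⊆ W²_{Ψ,1}(L) ⊆ W²_{Ψ,0}(L) ⊆ W²_{Ψ,2}(L) ⊆ W²_Ψ(L)`. -/
theorem qnr_pseudo_chain (Ω : Set ℂ) (A : ℂ → H₁ →ₗ.[ℂ] H₁) (B : ℂ → H₂ →ₗ.[ℂ] H₁)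
    (C : ℂ → H₁ →ₗ.[ℂ] H₂) (D : ℂ → H₂ →ₗ.[ℂ] H₂) :
    qnr Ω A B C D ⊆ qnrPsi1 Ω A B C D ∧
    qnrPsi1 Ω A B C D ⊆ qnrPsi0 Ω A B C D ∧
    qnrPsi0 Ω A B C D ⊆ qnrPsi2 Ω A B C D ∧
    qnrPsi2 Ω A B C D ⊆ qnrPsi Ω A B C D :=
  ⟨qnr_subset_qnrPsi1, qnrPsi1_subset_qnrPsi0, qnrPsi0_subset_qnrPsi2,
    qnrPsi2_subset_qnrPsi⟩

end
end

section
/- Let L be a 2×2 operator matrix function on Ω in H = H₁ ⊕ H₂ with H₁ ≠ {0}, H₂ ≠ {0}, such that D₁(λ) and D₂(λ) are dense in H₁ and H₂ respectively for every λ ∈ Ω. Then: (a) for every ε > 0, σ_{ap,ε}(L) ⊆ W²_ε(L); (b) for every ε > 0 and every λ ∈ Ω \ W²_ε(L), one has ‖L(λ)x‖ ≥ ε‖x‖ for all x ∈ dom L(λ); (c) σ_ap(L) ⊆ W²_Ψ(L). -/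
open Filter Topology

noncomputable section

variable {H₁ H₂ : Type*}
  [NormedAddCommGroup H₁] [InnerProductSpace ℂ H₁] [CompleteSpace H₁]
  [NormedAddCommGroup H₂] [InnerProductSpace ℂ H₂] [CompleteSpace H₂]

local notation "⟪" x ", " y "⟫" => @inner ℂ _ _ x y

/-- The `ε`-approximate point spectrum `σ_{ap,ε}(L)` of the operator matrix function. -/
def sigmaApEps2 (Ω : Set ℂ) (A : ℂ → H₁ →ₗ.[ℂ] H₁) (B : ℂ → H₂ →ₗ.[ℂ] H₁)
    (C : ℂ → H₁ →ₗ.[ℂ] H₂) (D : ℂ → H₂ →ₗ.[ℂ] H₂) (ε : ℝ) : Set ℂ :=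
  {l | l ∈ Ω ∧ ∃ (f : H₁) (g : H₂) (hfA : f ∈ (A l).domain) (hfC : f ∈ (C l).domain)
    (hgB : g ∈ (B l).domain) (hgD : g ∈ (D l).domain),
    ‖(WithLp.equiv 2 (H₁ × H₂)).symm (f, g)‖ = 1 ∧
    ‖(WithLp.equiv 2 (H₁ × H₂)).symm
      ((A l) ⟨f, hfA⟩ + (B l) ⟨g, hgB⟩, (C l) ⟨f, hfC⟩ + (D l) ⟨g, hgD⟩)‖ < ε}

/-- The approximate point spectrum `σ_ap(L)` of the operator matrix function. -/
def sigmaAp2 (Ω : Set ℂ) (A : ℂ → H₁ →ₗ.[ℂ] H₁) (B : ℂ → H₂ →ₗ.[ℂ] H₁)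
    (C : ℂ → H₁ →ₗ.[ℂ] H₂) (D : ℂ → H₂ →ₗ.[ℂ] H₂) : Set ℂ :=
  {l | l ∈ Ω ∧ ∃ (f : ℕ → H₁) (g : ℕ → H₂) (hfA : ∀ n, f n ∈ (A l).domain)
    (hfC : ∀ n, f n ∈ (C l).domain) (hgB : ∀ n, g n ∈ (B l).domain)
    (hgD : ∀ n, g n ∈ (D l).domain),
    (∀ n, ‖(WithLp.equiv 2 (H₁ × H₂)).symm (f n, g n)‖ = 1) ∧
    Tendsto (fun n => (WithLp.equiv 2 (H₁ × H₂)).symm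
      ((A l) ⟨f n, hfA n⟩ + (B l) ⟨g n, hgB n⟩,
        (C l) ⟨f n, hfC n⟩ + (D l) ⟨g n, hgD n⟩)) atTop (𝓝 0)}


private lemma exists_unit_mem_aux {E : Type*} [NormedAddCommGroup E] [NormedSpace ℂ E]
    [Nontrivial E] (S T : Submodule ℂ E) (hd : Dense ((S : Set E) ∩ (T : Set E))) :
    ∃ v : E, v ∈ S ∧ v ∈ T ∧ ‖v‖ = 1 := by
  obtain ⟨e, he⟩ := exists_ne (0 : E)
  have hball : (Metric.ball e ‖e‖).Nonempty := ⟨e, by simpa using norm_pos_iff.mpr he⟩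
  obtain ⟨v, hvmem, hvball⟩ := hd.exists_mem_open Metric.isOpen_ball hball
  have hv0 : v ≠ 0 := by
    intro h
    rw [h, Metric.mem_ball, dist_eq_norm, zero_sub, norm_neg] at hvball
    exact lt_irrefl _ hvball
  refine ⟨((‖v‖⁻¹ : ℝ) : ℂ) • v, S.smul_mem _ hvmem.1, T.smul_mem _ hvmem.2, ?_⟩
  rw [norm_smul]
  simp [inv_mul_cancel₀ (norm_ne_zero_iff.mpr hv0)]


set_option maxHeartbeats 2000000 in
private lemma partA_aux [Nontrivial H₁] [Nontrivial H₂]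
    (Ω : Set ℂ) (A : ℂ → H₁ →ₗ.[ℂ] H₁) (B : ℂ → H₂ →ₗ.[ℂ] H₁)
    (C : ℂ → H₁ →ₗ.[ℂ] H₂) (D : ℂ → H₂ →ₗ.[ℂ] H₂)
    (hd1 : ∀ l ∈ Ω, Dense (((A l).domain : Set H₁) ∩ ((C l).domain : Set H₁)))
    (hd2 : ∀ l ∈ Ω, Dense (((B l).domain : Set H₂) ∩ ((D l).domain : Set H₂)))
    (ε : ℝ) (hε : 0 < ε) : sigmaApEps2 Ω A B C D ε ⊆ qnrEps Ω A B C D ε := by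
  intro l hl
  obtain ⟨hlΩ, f, g, hfA, hfC, hgB, hgD, hx1, hLx⟩ := hl
  set u : H₁ := (A l) ⟨f, hfA⟩ + (B l) ⟨g, hgB⟩ with hu
  set v : H₂ := (C l) ⟨f, hfC⟩ + (D l) ⟨g, hgD⟩ with hv
  set x : WithLp 2 (H₁ × H₂) := (WithLp.equiv 2 (H₁ × H₂)).symm (f, g) with hxdef
  set y : WithLp 2 (H₁ × H₂) := (WithLp.equiv 2 (H₁ × H₂)).symm (-u, -v) with hydef
  set 𝓑 : WithLp 2 (H₁ × H₂) →L[ℂ] WithLp 2 (H₁ × H₂) :=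
    (innerSL ℂ x).smulRight y with hBdef
  have hyneg : y = -((WithLp.equiv 2 (H₁ × H₂)).symm (u, v)) := rfl
  have hnormB : ‖𝓑‖ < ε := by
    rw [hBdef, ContinuousLinearMap.norm_smulRight_apply, innerSL_apply_norm, hx1, one_mul,
      hyneg, norm_neg]
    exact hLx
  have hblk11 : ∀ f' : H₁, blk11 𝓑 f' = ⟪f, f'⟫ • (-u) := by
    intro f'
    show ((WithLp.equiv 2 (H₁ × H₂)) (𝓑 ((WithLp.equiv 2 (H₁ × H₂)).symm (f', 0)))).1 = _
    rw [hBdef, ContinuousLinearMap.smulRight_apply, innerSL_apply_apply]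
    have h1 : ⟪x, (WithLp.equiv 2 (H₁ × H₂)).symm (f', 0)⟫ = ⟪f, f'⟫ := by
      rw [hxdef, WithLp.prod_inner_apply]
      simp
    rw [h1]
    rfl
  have hblk21 : ∀ f' : H₁, blk21 𝓑 f' = ⟪f, f'⟫ • (-v) := by
    intro f'
    show ((WithLp.equiv 2 (H₁ × H₂)) (𝓑 ((WithLp.equiv 2 (H₁ × H₂)).symm (f', 0)))).2 = _
    rw [hBdef, ContinuousLinearMap.smulRight_apply, innerSL_apply_apply]
    have h1 : ⟪x, (WithLp.equiv 2 (H₁ × H₂)).symm (f', 0)⟫ = ⟪f, f'⟫ := by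
      rw [hxdef, WithLp.prod_inner_apply]
      simp
    rw [h1]
    rfl
  have hblk12 : ∀ g' : H₂, blk12 𝓑 g' = ⟪g, g'⟫ • (-u) := by
    intro g'
    show ((WithLp.equiv 2 (H₁ × H₂)) (𝓑 ((WithLp.equiv 2 (H₁ × H₂)).symm (0, g')))).1 = _
    rw [hBdef, ContinuousLinearMap.smulRight_apply, innerSL_apply_apply]
    have h1 : ⟪x, (WithLp.equiv 2 (H₁ × H₂)).symm (0, g')⟫ = ⟪g, g'⟫ := by
      rw [hxdef, WithLp.prod_inner_apply]
      simp
    rw [h1]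
    rfl
  have hblk22 : ∀ g' : H₂, blk22 𝓑 g' = ⟪g, g'⟫ • (-v) := by
    intro g'
    show ((WithLp.equiv 2 (H₁ × H₂)) (𝓑 ((WithLp.equiv 2 (H₁ × H₂)).symm (0, g')))).2 = _
    rw [hBdef, ContinuousLinearMap.smulRight_apply, innerSL_apply_apply]
    have h1 : ⟪x, (WithLp.equiv 2 (H₁ × H₂)).symm (0, g')⟫ = ⟪g, g'⟫ := by
      rw [hxdef, WithLp.prod_inner_apply]
      simp
    rw [h1]
    rfl
  have hxx : ⟪f, f⟫ + ⟪g, g⟫ = (1 : ℂ) := by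
    have h1 : ⟪x, x⟫ = ⟪f, f⟫ + ⟪g, g⟫ := by
      rw [hxdef, WithLp.prod_inner_apply]
      simp
    have h2 : ⟪x, x⟫ = ((‖x‖ : ℂ)) ^ 2 := inner_self_eq_norm_sq_to_K x
    rw [h1, hx1] at h2
    simpa using h2
  have hnormsq : ‖f‖ ^ 2 + ‖g‖ ^ 2 = 1 := by
    have h1 := WithLp.prod_norm_sq_eq_of_L2 x
    rw [hx1] at h1
    have h2 : (x.fst : H₁) = f := by rw [hxdef]; simp
    have h3 : (x.snd : H₂) = g := by rw [hxdef]; simp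
    rw [h2, h3] at h1
    simpa using h1.symm
  have hab : ((A l) ⟨f, hfA⟩ + blk11 𝓑 f) + ((B l) ⟨g, hgB⟩ + blk12 𝓑 g) = 0 := by
    rw [hblk11, hblk12]
    have h1 : (A l) ⟨f, hfA⟩ + ⟪f, f⟫ • (-u) + ((B l) ⟨g, hgB⟩ + ⟪g, g⟫ • (-u))
        = u - (⟪f, f⟫ + ⟪g, g⟫) • u := by
      rw [hu]
      module
    rw [h1, hxx, one_smul, sub_self]
  have hcd : ((C l) ⟨f, hfC⟩ + blk21 𝓑 f) + ((D l) ⟨g, hgD⟩ + blk22 𝓑 g) = 0 := by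
    rw [hblk21, hblk22]
    have h1 : (C l) ⟨f, hfC⟩ + ⟪f, f⟫ • (-v) + ((D l) ⟨g, hgD⟩ + ⟪g, g⟫ • (-v))
        = v - (⟪f, f⟫ + ⟪g, g⟫) • v := by
      rw [hv]
      module
    rw [h1, hxx, one_smul, sub_self]
  have hmem : l ∈ qnrPert Ω A B C D 𝓑 := by
    refine ⟨hlΩ, ?_⟩
    rcases eq_or_ne f 0 with hf0 | hf0
    · -- f = 0 : choose any unit vector in dom A ∩ dom C
      have hff : ⟪f, f⟫ = (0 : ℂ) := by rw [hf0]; simp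
      have hfz : (⟨f, hfA⟩ : (A l).domain) = 0 := Subtype.ext hf0
      have hfzC : (⟨f, hfC⟩ : (C l).domain) = 0 := Subtype.ext hf0
      have haa : (A l) ⟨f, hfA⟩ + blk11 𝓑 f = 0 := by
        rw [hblk11, hff, zero_smul, add_zero, hfz, (A l).map_zero]
      have hccz : (C l) ⟨f, hfC⟩ + blk21 𝓑 f = 0 := by
        rw [hblk21, hff, zero_smul, add_zero, hfzC, (C l).map_zero]
      have hbb : (B l) ⟨g, hgB⟩ + blk12 𝓑 g = 0 := by
        rw [haa, zero_add] at hab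
        exact hab
      have hdd : (D l) ⟨g, hgD⟩ + blk22 𝓑 g = 0 := by
        rw [hccz, zero_add] at hcd
        exact hcd
      have hg1 : ‖g‖ = 1 := by
        rw [hf0, norm_zero] at hnormsq
        nlinarith [norm_nonneg g]
      obtain ⟨f', hf'A, hf'C, hf'1⟩ := exists_unit_mem_aux (A l).domain (C l).domain (hd1 l hlΩ)
      refine ⟨f', g, hf'A, hf'C, hgB, hgD, hf'1, hg1, ?_⟩
      rw [hbb, hdd]
      simp
    rcases eq_or_ne g 0 with hg0 | hg0
    · -- g = 0 : choose any unit vector in dom B ∩ dom D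
      have hgg : ⟪g, g⟫ = (0 : ℂ) := by rw [hg0]; simp
      have hgz : (⟨g, hgB⟩ : (B l).domain) = 0 := Subtype.ext hg0
      have hgzD : (⟨g, hgD⟩ : (D l).domain) = 0 := Subtype.ext hg0
      have hbb : (B l) ⟨g, hgB⟩ + blk12 𝓑 g = 0 := by
        rw [hblk12, hgg, zero_smul, add_zero, hgz, (B l).map_zero]
      have hddz : (D l) ⟨g, hgD⟩ + blk22 𝓑 g = 0 := by
        rw [hblk22, hgg, zero_smul, add_zero, hgzD, (D l).map_zero]
      have haa : (A l) ⟨f, hfA⟩ + blk11 𝓑 f = 0 := by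
        rw [add_comm] at hab
        rw [hbb, zero_add] at hab
        exact hab
      have hcc : (C l) ⟨f, hfC⟩ + blk21 𝓑 f = 0 := by
        rw [add_comm] at hcd
        rw [hddz, zero_add] at hcd
        exact hcd
      have hf1 : ‖f‖ = 1 := by
        rw [hg0, norm_zero] at hnormsq
        nlinarith [norm_nonneg f]
      obtain ⟨g', hg'B, hg'D, hg'1⟩ := exists_unit_mem_aux (B l).domain (D l).domain (hd2 l hlΩ)
      refine ⟨f, g', hfA, hfC, hg'B, hg'D, hf1, hg'1, ?_⟩
      rw [haa, hcc]
      simp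
    · -- f ≠ 0, g ≠ 0 : normalize
      have hfn : ‖f‖ ≠ 0 := norm_ne_zero_iff.mpr hf0
      have hgn : ‖g‖ ≠ 0 := norm_ne_zero_iff.mpr hg0
      set cf : ℂ := ((‖f‖⁻¹ : ℝ) : ℂ) with hcf
      set cg : ℂ := ((‖g‖⁻¹ : ℝ) : ℂ) with hcg
      refine ⟨cf • f, cg • g, Submodule.smul_mem _ _ hfA, Submodule.smul_mem _ _ hfC,
        Submodule.smul_mem _ _ hgB, Submodule.smul_mem _ _ hgD, ?_, ?_, ?_⟩
      · rw [norm_smul, hcf]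
        simp [abs_of_nonneg (inv_nonneg.mpr (norm_nonneg f)), inv_mul_cancel₀ hfn]
      · rw [norm_smul, hcg]
        simp [abs_of_nonneg (inv_nonneg.mpr (norm_nonneg g)), inv_mul_cancel₀ hgn]
      · have hAs : (A l) ⟨cf • f, Submodule.smul_mem _ cf hfA⟩ + blk11 𝓑 (cf • f)
            = cf • ((A l) ⟨f, hfA⟩ + blk11 𝓑 f) := by
          rw [show (⟨cf • f, Submodule.smul_mem _ cf hfA⟩ : (A l).domain)
              = cf • (⟨f, hfA⟩ : (A l).domain) from rfl, (A l).map_smul,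
            hblk11, hblk11, inner_smul_right, mul_smul, smul_add]
        have hCs : (C l) ⟨cf • f, Submodule.smul_mem _ cf hfC⟩ + blk21 𝓑 (cf • f)
            = cf • ((C l) ⟨f, hfC⟩ + blk21 𝓑 f) := by
          rw [show (⟨cf • f, Submodule.smul_mem _ cf hfC⟩ : (C l).domain)
              = cf • (⟨f, hfC⟩ : (C l).domain) from rfl, (C l).map_smul,
            hblk21, hblk21, inner_smul_right, mul_smul, smul_add]
        have hBs : (B l) ⟨cg • g, Submodule.smul_mem _ cg hgB⟩ + blk12 𝓑 (cg • g)
            = cg • ((B l) ⟨g, hgB⟩ + blk12 𝓑 g) := by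
          rw [show (⟨cg • g, Submodule.smul_mem _ cg hgB⟩ : (B l).domain)
              = cg • (⟨g, hgB⟩ : (B l).domain) from rfl, (B l).map_smul,
            hblk12, hblk12, inner_smul_right, mul_smul, smul_add]
        have hDs : (D l) ⟨cg • g, Submodule.smul_mem _ cg hgD⟩ + blk22 𝓑 (cg • g)
            = cg • ((D l) ⟨g, hgD⟩ + blk22 𝓑 g) := by
          rw [show (⟨cg • g, Submodule.smul_mem _ cg hgD⟩ : (D l).domain)
              = cg • (⟨g, hgD⟩ : (D l).domain) from rfl, (D l).map_smul,
            hblk22, hblk22, inner_smul_right, mul_smul, smul_add]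
        rw [hAs, hBs, hCs, hDs]
        have haa : (A l) ⟨f, hfA⟩ + blk11 𝓑 f = -((B l) ⟨g, hgB⟩ + blk12 𝓑 g) :=
          eq_neg_of_add_eq_zero_left hab
        have hcc : (C l) ⟨f, hfC⟩ + blk21 𝓑 f = -((D l) ⟨g, hgD⟩ + blk22 𝓑 g) :=
          eq_neg_of_add_eq_zero_left hcd
        rw [haa, hcc]
        simp only [smul_neg, inner_neg_right, inner_smul_left, inner_smul_right,
          Complex.conj_ofReal, hcf, hcg]
        ring
  exact Set.mem_iUnion.mpr ⟨𝓑, Set.mem_iUnion.mpr ⟨hnormB, hmem⟩⟩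

/-- (a) `σ_{ap,ε}(L) ⊆ W²_ε(L)`; (b) for `λ ∈ Ω \ W²_ε(L)`, `‖L(λ)x‖ ≥ ε‖x‖` on
`dom L(λ)`; (c) `σ_ap(L) ⊆ W²_Ψ(L)`. -/
theorem sigmaAp_subset_pseudoQnr [Nontrivial H₁] [Nontrivial H₂]
    (Ω : Set ℂ) (A : ℂ → H₁ →ₗ.[ℂ] H₁) (B : ℂ → H₂ →ₗ.[ℂ] H₁)
    (C : ℂ → H₁ →ₗ.[ℂ] H₂) (D : ℂ → H₂ →ₗ.[ℂ] H₂)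
    (hd1 : ∀ l ∈ Ω, Dense (((A l).domain : Set H₁) ∩ ((C l).domain : Set H₁)))
    (hd2 : ∀ l ∈ Ω, Dense (((B l).domain : Set H₂) ∩ ((D l).domain : Set H₂))) :
    (∀ ε > (0 : ℝ), sigmaApEps2 Ω A B C D ε ⊆ qnrEps Ω A B C D ε) ∧
    (∀ ε > (0 : ℝ), ∀ l ∈ Ω, l ∉ qnrEps Ω A B C D ε →
      ∀ (f : H₁) (g : H₂) (hfA : f ∈ (A l).domain) (hfC : f ∈ (C l).domain)
        (hgB : g ∈ (B l).domain) (hgD : g ∈ (D l).domain),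
        ε * ‖(WithLp.equiv 2 (H₁ × H₂)).symm (f, g)‖ ≤
          ‖(WithLp.equiv 2 (H₁ × H₂)).symm
            ((A l) ⟨f, hfA⟩ + (B l) ⟨g, hgB⟩, (C l) ⟨f, hfC⟩ + (D l) ⟨g, hgD⟩)‖) ∧
    sigmaAp2 Ω A B C D ⊆ qnrPsi Ω A B C D := by
  have hA : ∀ ε > (0 : ℝ), sigmaApEps2 Ω A B C D ε ⊆ qnrEps Ω A B C D ε :=
    fun ε hε => partA_aux Ω A B C D hd1 hd2 ε hε
  refine ⟨hA, ?_, ?_⟩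
  · -- part (b)
    intro ε hε l hlΩ hlnot f g hfA hfC hgB hgD
    by_contra hcon
    push_neg at hcon
    rcases eq_or_ne ‖(WithLp.equiv 2 (H₁ × H₂)).symm (f, g)‖ 0 with hx0 | hx0
    · rw [hx0, mul_zero] at hcon
      exact absurd (norm_nonneg _) (not_le.mpr hcon)
    · have hxpos : 0 < ‖(WithLp.equiv 2 (H₁ × H₂)).symm (f, g)‖ :=
        lt_of_le_of_ne (norm_nonneg _) (Ne.symm hx0)
      apply hlnot
      apply hA ε hε
      set c : ℂ := ((‖(WithLp.equiv 2 (H₁ × H₂)).symm (f, g)‖⁻¹ : ℝ) : ℂ) with hc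
      have hcnorm : ‖c‖ = ‖(WithLp.equiv 2 (H₁ × H₂)).symm (f, g)‖⁻¹ := by
        simp [hc, abs_inv]
      have hsmul : ∀ (a : H₁) (b : H₂),
          ((WithLp.equiv 2 (H₁ × H₂)).symm (c • a, c • b) : WithLp 2 (H₁ × H₂))
            = c • (WithLp.equiv 2 (H₁ × H₂)).symm (a, b) := fun _ _ => rfl
      refine ⟨hlΩ, c • f, c • g, Submodule.smul_mem _ _ hfA, Submodule.smul_mem _ _ hfC,
        Submodule.smul_mem _ _ hgB, Submodule.smul_mem _ _ hgD, ?_, ?_⟩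
      · rw [hsmul, norm_smul, hcnorm, inv_mul_cancel₀ hx0]
      · have hAs : (A l) ⟨c • f, Submodule.smul_mem _ c hfA⟩ = c • (A l) ⟨f, hfA⟩ := by
          rw [show (⟨c • f, Submodule.smul_mem _ c hfA⟩ : (A l).domain)
              = c • (⟨f, hfA⟩ : (A l).domain) from rfl, (A l).map_smul]
        have hBs : (B l) ⟨c • g, Submodule.smul_mem _ c hgB⟩ = c • (B l) ⟨g, hgB⟩ := by
          rw [show (⟨c • g, Submodule.smul_mem _ c hgB⟩ : (B l).domain)
              = c • (⟨g, hgB⟩ : (B l).domain) from rfl, (B l).map_smul]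
        have hCs : (C l) ⟨c • f, Submodule.smul_mem _ c hfC⟩ = c • (C l) ⟨f, hfC⟩ := by
          rw [show (⟨c • f, Submodule.smul_mem _ c hfC⟩ : (C l).domain)
              = c • (⟨f, hfC⟩ : (C l).domain) from rfl, (C l).map_smul]
        have hDs : (D l) ⟨c • g, Submodule.smul_mem _ c hgD⟩ = c • (D l) ⟨g, hgD⟩ := by
          rw [show (⟨c • g, Submodule.smul_mem _ c hgD⟩ : (D l).domain)
              = c • (⟨g, hgD⟩ : (D l).domain) from rfl, (D l).map_smul]
        rw [hAs, hBs, hCs, hDs, ← smul_add, ← smul_add, hsmul, norm_smul, hcnorm]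
        rw [inv_mul_lt_iff₀ hxpos]
        linarith [hcon]
  · -- part (c)
    intro l hl
    obtain ⟨hlΩ, f, g, hfA, hfC, hgB, hgD, hnorm, htend⟩ := hl
    refine Set.mem_iInter.mpr fun ε => Set.mem_iInter.mpr fun hε => ?_
    obtain ⟨n, hn⟩ : ∃ n, dist ((WithLp.equiv 2 (H₁ × H₂)).symm
        ((A l) ⟨f n, hfA n⟩ + (B l) ⟨g n, hgB n⟩,
          (C l) ⟨f n, hfC n⟩ + (D l) ⟨g n, hgD n⟩)) 0 < ε := by
      obtain ⟨N, hN⟩ := Metric.tendsto_atTop.mp htend ε hε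
      exact ⟨N, hN N le_rfl⟩
    have hn' : ‖(WithLp.equiv 2 (H₁ × H₂)).symm
        ((A l) ⟨f n, hfA n⟩ + (B l) ⟨g n, hgB n⟩,
          (C l) ⟨f n, hfC n⟩ + (D l) ⟨g n, hgD n⟩)‖ < ε := by
      simpa [dist_eq_norm] using hn
    exact hA ε hε ⟨hlΩ, f n, g n, hfA n, hfC n, hgB n, hgD n, hnorm n, hn'⟩

end
end

section
/- Let L be a 2×2 operator matrix function on Ω in H = H₁ ⊕ H₂ and let λ ∈ Ω satisfy: λ ∈ σ_ap(L); A(λ) and D(λ) are boundedly invertible; dom A(λ) ⊆ dom C(λ) and C(λ) is A(λ)-bounded; dom D(λ) ⊆ dom B(λ) and B(λ) is D(λ)-bounded. Then λ ∈ σ_ap(S₁) ∪ σ_ap(S₂). -/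
open Filter Topology

noncomputable section

variable {H₁ H₂ : Type*}
  [NormedAddCommGroup H₁] [InnerProductSpace ℂ H₁] [CompleteSpace H₁]
  [NormedAddCommGroup H₂] [InnerProductSpace ℂ H₂] [CompleteSpace H₂]

/-- `R` is a bounded, everywhere defined inverse of the partially defined operator `S`. -/
def IsBddInv {K₁ K₂ : Type*} [NormedAddCommGroup K₁] [NormedSpace ℂ K₁]
    [NormedAddCommGroup K₂] [NormedSpace ℂ K₂]
    (S : K₁ →ₗ.[ℂ] K₂) (R : K₂ →L[ℂ] K₁) : Prop :=
  (∀ v : S.domain, R (S v) = v) ∧ ∀ h : K₂, ∃ hm : R h ∈ S.domain, S ⟨R h, hm⟩ = h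

/-!
Take unit vectors `(f n, g n)` with `A f + B g → 0` and `C f + D g → 0`. Since
`‖f n‖² + ‖g n‖² = 1`, one component, say `f`, has norm `≥ 1/2` infinitely often.
`D`-boundedness of `B` makes `B D⁻¹` bounded, so `B D⁻¹ (C f + D g) = B D⁻¹ C f + B g → 0`;
subtracting this from `A f + B g → 0` gives `S₁ f → 0`, and normalising `f` along the
subsequence shows `λ ∈ σ_ap(S₁)`. If instead `g` is large, the same argument with the roles
of `A, B` and `D, C` exchanged gives `λ ∈ σ_ap(S₂)`.
-/

section IsBddInv

variable {K₁ K₂ : Type*} [NormedAddCommGroup K₁] [NormedSpace ℂ K₁]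
  [NormedAddCommGroup K₂] [NormedSpace ℂ K₂] {S : K₁ →ₗ.[ℂ] K₂} {R : K₂ →L[ℂ] K₁}

theorem IsBddInv.mem_domain (hR : IsBddInv S R) (y : K₂) : R y ∈ S.domain :=
  (hR.2 y).1

theorem IsBddInv.apply_inv (hR : IsBddInv S R) (y : K₂) : S ⟨R y, hR.mem_domain y⟩ = y :=
  (hR.2 y).2

theorem IsBddInv.inv_apply (hR : IsBddInv S R) {x : K₁} (hx : x ∈ S.domain) :
    R (S ⟨x, hx⟩) = x :=
  hR.1 ⟨x, hx⟩

end IsBddInv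

namespace LinearPMap

section General

variable {𝕜 E F G : Type*} [RCLike 𝕜] [NormedAddCommGroup E] [NormedSpace 𝕜 E]
  [NormedAddCommGroup F] [NormedSpace 𝕜 F] [NormedAddCommGroup G] [NormedSpace 𝕜 G]

/-- `0 ∈ σ_ap(T)`. -/
def HasApproxNullSeq (T : E →ₗ.[𝕜] F) : Prop :=
  ∃ x : ℕ → T.domain, (∀ n, ‖(x n : E)‖ = 1) ∧ Tendsto (fun n => T (x n)) atTop (𝓝 0)

theorem hasApproxNullSeq_of_frequently_le_norm (T : E →ₗ.[𝕜] F) (x : ℕ → T.domain)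
    {c : ℝ} (hc : 0 < c) (hx : ∃ᶠ n in atTop, c ≤ ‖(x n : E)‖)
    (hTx : Tendsto (fun n => T (x n)) atTop (𝓝 0)) : T.HasApproxNullSeq := by
  obtain ⟨φ, hφ, hcφ⟩ := extraction_of_frequently_atTop hx
  have hpos : ∀ n, 0 < ‖(x (φ n) : E)‖ := fun n => hc.trans_le (hcφ n)
  refine ⟨fun n => ((‖(x (φ n) : E)‖⁻¹ : ℝ) : 𝕜) • x (φ n), fun n => ?_, ?_⟩
  · simp [norm_smul, inv_mul_cancel₀ (hpos n).ne']
  · have hbound : Tendsto (fun n => c⁻¹ * ‖T (x (φ n))‖) atTop (𝓝 0) := by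
      simpa using ((hTx.comp hφ.tendsto_atTop).norm).const_mul c⁻¹
    refine squeeze_zero_norm (fun n => ?_) hbound
    rw [T.map_smul, norm_smul, RCLike.norm_ofReal, abs_inv, abs_norm]
    gcongr
    exact hcφ n

def IsRelBounded (S : E →ₗ.[𝕜] F) (T : E →ₗ.[𝕜] G) (hTS : (T.domain : Set E) ⊆ S.domain) :
    Prop :=
  ∃ a b : ℝ, 0 ≤ a ∧ 0 ≤ b ∧ ∀ (f : E) (hf : f ∈ T.domain),
    ‖S ⟨f, hTS hf⟩‖ ≤ a * ‖f‖ + b * ‖T ⟨f, hf⟩‖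

/-- `S₁ = A - B D⁻¹ C` with `R = D⁻¹`; as `R` maps into `dom B`, the domain is all of
`dom A ∩ dom C`. -/
def schurComplement (A : E →ₗ.[𝕜] E) (B : F →ₗ.[𝕜] E) (C : E →ₗ.[𝕜] F) (R : F →L[𝕜] F)
    (hR : ∀ y, R y ∈ B.domain) : E →ₗ.[𝕜] E where
  domain := A.domain ⊓ C.domain
  toFun := A.toFun ∘ₗ Submodule.inclusion inf_le_left -
    B.toFun ∘ₗ (R.toLinearMap ∘ₗ C.toFun ∘ₗ Submodule.inclusion inf_le_right).codRestrict
      B.domain fun _ => hR _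

end General

variable {E F : Type*} [NormedAddCommGroup E] [NormedSpace ℂ E]
  [NormedAddCommGroup F] [NormedSpace ℂ F]

theorem IsRelBounded.tendsto_comp_of_isBddInv {S : F →ₗ.[ℂ] E} {T : F →ₗ.[ℂ] F}
    {hTS : (T.domain : Set F) ⊆ S.domain} (hS : S.IsRelBounded T hTS) {R : F →L[ℂ] F}
    (hR : IsBddInv T R) {v : ℕ → F} (hv : Tendsto v atTop (𝓝 0)) :
    Tendsto (fun n => S ⟨R (v n), hTS (hR.mem_domain (v n))⟩) atTop (𝓝 0) := by
  obtain ⟨a, b, ha, hb, hbd⟩ := hS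
  have hbound : Tendsto (fun n => (a * ‖R‖ + b) * ‖v n‖) atTop (𝓝 0) := by
    simpa using hv.norm.const_mul (a * ‖R‖ + b)
  refine squeeze_zero_norm (fun n => ?_) hbound
  calc ‖S ⟨R (v n), _⟩‖ ≤ a * ‖R (v n)‖ + b * ‖T ⟨R (v n), hR.mem_domain (v n)⟩‖ :=
        hbd _ (hR.mem_domain (v n))
    _ ≤ a * (‖R‖ * ‖v n‖) + b * ‖v n‖ := by
        rw [hR.apply_inv]
        gcongr
        exact R.le_opNorm _
    _ = (a * ‖R‖ + b) * ‖v n‖ := by ring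

theorem tendsto_schurComplement {A : E →ₗ.[ℂ] E} {B : F →ₗ.[ℂ] E} {C : E →ₗ.[ℂ] F}
    {D : F →ₗ.[ℂ] F} {R : F →L[ℂ] F} (hR : IsBddInv D R)
    {hDB : (D.domain : Set F) ⊆ B.domain} (hB : B.IsRelBounded D hDB)
    {f : ℕ → E} {g : ℕ → F} (hfA : ∀ n, f n ∈ A.domain) (hfC : ∀ n, f n ∈ C.domain)
    (hgD : ∀ n, g n ∈ D.domain)
    (hu : Tendsto (fun n => A ⟨f n, hfA n⟩ + B ⟨g n, hDB (hgD n)⟩) atTop (𝓝 0))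
    (hv : Tendsto (fun n => C ⟨f n, hfC n⟩ + D ⟨g n, hgD n⟩) atTop (𝓝 0)) :
    Tendsto (fun n => schurComplement A B C R (fun y => hDB (hR.mem_domain y))
      ⟨f n, hfA n, hfC n⟩) atTop (𝓝 0) := by
  set v := fun n => C ⟨f n, hfC n⟩ + D ⟨g n, hgD n⟩
  -- `R v = R C f + g`, so the Schur complement is `(A f + B g) - B R v`.
  have hRv : ∀ n, R (v n) = R (C ⟨f n, hfC n⟩) + g n := fun n => by
    change R (C ⟨f n, hfC n⟩ + D ⟨g n, hgD n⟩) = _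
    rw [R.map_add, hR.inv_apply (hgD n)]
  have hschur : ∀ n, schurComplement A B C R (fun y => hDB (hR.mem_domain y)) ⟨f n, hfA n, hfC n⟩
      = (A ⟨f n, hfA n⟩ + B ⟨g n, hDB (hgD n)⟩) - B ⟨R (v n), hDB (hR.mem_domain (v n))⟩ := by
    intro n
    have hsub : (⟨R (C ⟨f n, hfC n⟩), hDB (hR.mem_domain _)⟩ : B.domain)
        = ⟨R (v n), hDB (hR.mem_domain (v n))⟩ - ⟨g n, hDB (hgD n)⟩ := by
      ext
      simp [hRv n]
    calc _ = A ⟨f n, hfA n⟩ - B ⟨R (C ⟨f n, hfC n⟩), hDB (hR.mem_domain _)⟩ := rfl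
      _ = _ := by rw [hsub, B.map_sub]; abel
  simpa [hschur] using hu.sub (hB.tendsto_comp_of_isBddInv hR hv)

theorem hasApproxNullSeq_schurComplement {A : E →ₗ.[ℂ] E} {B : F →ₗ.[ℂ] E} {C : E →ₗ.[ℂ] F}
    {D : F →ₗ.[ℂ] F} {R : F →L[ℂ] F} (hR : IsBddInv D R)
    {hDB : (D.domain : Set F) ⊆ B.domain} (hB : B.IsRelBounded D hDB)
    {f : ℕ → E} {g : ℕ → F} (hfA : ∀ n, f n ∈ A.domain) (hfC : ∀ n, f n ∈ C.domain)
    (hgD : ∀ n, g n ∈ D.domain)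
    (hu : Tendsto (fun n => A ⟨f n, hfA n⟩ + B ⟨g n, hDB (hgD n)⟩) atTop (𝓝 0))
    (hv : Tendsto (fun n => C ⟨f n, hfC n⟩ + D ⟨g n, hgD n⟩) atTop (𝓝 0))
    {c : ℝ} (hc : 0 < c) (hf : ∃ᶠ n in atTop, c ≤ ‖f n‖) :
    (schurComplement A B C R fun y => hDB (hR.mem_domain y)).HasApproxNullSeq :=
  hasApproxNullSeq_of_frequently_le_norm _ (fun n => ⟨f n, hfA n, hfC n⟩) hc hf
    (tendsto_schurComplement hR hB hfA hfC hgD hu hv)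

end LinearPMap

theorem WithLp.half_le_norm_fst_or_snd {α β : Type*} [SeminormedAddCommGroup α]
    [SeminormedAddCommGroup β] (x : WithLp 2 (α × β)) (hx : ‖x‖ = 1) :
    1 / 2 ≤ ‖x.fst‖ ∨ 1 / 2 ≤ ‖x.snd‖ := by
  have h := WithLp.prod_norm_sq_eq_of_L2 x
  by_contra! hlt
  nlinarith [norm_nonneg x.fst, norm_nonneg x.snd]

theorem WithLp.tendsto_nhds_zero_of_tendsto_equiv_symm {ι α β : Type*} {l : Filter ι}
    {p : ENNReal} [Fact (1 ≤ p)] [SeminormedAddCommGroup α] [SeminormedAddCommGroup β]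
    {u : ι → α} {v : ι → β}
    (h : Tendsto (fun n => (WithLp.equiv p (α × β)).symm (u n, v n)) l (𝓝 0)) :
    Tendsto u l (𝓝 0) ∧ Tendsto v l (𝓝 0) := by
  simpa [Prod.tendsto_iff] using ((WithLp.prod_continuous_ofLp p α β).tendsto 0).comp h

theorem sigmaAp_mem_schur_of_diagonally_dominant_general
    (A : ℂ → H₁ →ₗ.[ℂ] H₁) (B : ℂ → H₂ →ₗ.[ℂ] H₁)
    (C : ℂ → H₁ →ₗ.[ℂ] H₂) (D : ℂ → H₂ →ₗ.[ℂ] H₂)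
    (l : ℂ)
    (hap : ∃ (f : ℕ → H₁) (g : ℕ → H₂) (hfA : ∀ n, f n ∈ (A l).domain)
      (hfC : ∀ n, f n ∈ (C l).domain) (hgB : ∀ n, g n ∈ (B l).domain)
      (hgD : ∀ n, g n ∈ (D l).domain),
      (∀ n, ‖(WithLp.equiv 2 (H₁ × H₂)).symm (f n, g n)‖ = 1) ∧
      Tendsto (fun n => (WithLp.equiv 2 (H₁ × H₂)).symm
        ((A l) ⟨f n, hfA n⟩ + (B l) ⟨g n, hgB n⟩,
          (C l) ⟨f n, hfC n⟩ + (D l) ⟨g n, hgD n⟩)) atTop (𝓝 0))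
    (RA : H₁ →L[ℂ] H₁) (hRA : IsBddInv (A l) RA)
    (RD : H₂ →L[ℂ] H₂) (hRD : IsBddInv (D l) RD)
    (hAC : ((A l).domain : Set H₁) ⊆ ((C l).domain : Set H₁))
    (hCbd : ∃ a b : ℝ, 0 ≤ a ∧ 0 ≤ b ∧ ∀ (f : H₁) (hf : f ∈ (A l).domain),
      ‖(C l) ⟨f, hAC hf⟩‖ ≤ a * ‖f‖ + b * ‖(A l) ⟨f, hf⟩‖)
    (hDB : ((D l).domain : Set H₂) ⊆ ((B l).domain : Set H₂))
    (hBbd : ∃ a b : ℝ, 0 ≤ a ∧ 0 ≤ b ∧ ∀ (g : H₂) (hg : g ∈ (D l).domain),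
      ‖(B l) ⟨g, hDB hg⟩‖ ≤ a * ‖g‖ + b * ‖(D l) ⟨g, hg⟩‖) :
    (∃ (f : ℕ → H₁) (hfA : ∀ n, f n ∈ (A l).domain) (hfC : ∀ n, f n ∈ (C l).domain)
      (hB : ∀ n, RD ((C l) ⟨f n, hfC n⟩) ∈ (B l).domain),
      (∀ n, ‖f n‖ = 1) ∧
      Tendsto (fun n => (A l) ⟨f n, hfA n⟩
        - (B l) ⟨RD ((C l) ⟨f n, hfC n⟩), hB n⟩) atTop (𝓝 0)) ∨
    (∃ (g : ℕ → H₂) (hgB : ∀ n, g n ∈ (B l).domain) (hgD : ∀ n, g n ∈ (D l).domain)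
      (hC : ∀ n, RA ((B l) ⟨g n, hgB n⟩) ∈ (C l).domain),
      (∀ n, ‖g n‖ = 1) ∧
      Tendsto (fun n => (D l) ⟨g n, hgD n⟩
        - (C l) ⟨RA ((B l) ⟨g n, hgB n⟩), hC n⟩) atTop (𝓝 0)) := by
  obtain ⟨f, g, hfA, hfC, hgB, hgD, hnorm, hL⟩ := hap
  obtain ⟨hu, hv⟩ := WithLp.tendsto_nhds_zero_of_tendsto_equiv_symm hL
  rcases frequently_or_distrib.1 <| Frequently.of_forall (f := atTop) fun n =>
    WithLp.half_le_norm_fst_or_snd _ (hnorm n) with hf | hg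
  · obtain ⟨x, hx, hSx⟩ := LinearPMap.hasApproxNullSeq_schurComplement hRD hBbd hfA hfC hgD hu hv
      one_half_pos hf
    exact .inl ⟨fun n => x n, fun n => (x n).2.1, fun n => (x n).2.2,
      fun _ => hDB (hRD.mem_domain _), hx, hSx⟩
  · obtain ⟨y, hy, hSy⟩ := LinearPMap.hasApproxNullSeq_schurComplement hRA hCbd hgD hgB hfA
      (by simpa only [add_comm] using hv) (by simpa only [add_comm] using hu) one_half_pos hg
    exact .inr ⟨fun n => y n, fun n => (y n).2.2, fun n => (y n).2.1,
      fun _ => hAC (hRA.mem_domain _), hy, hSy⟩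

/-- If `λ ∈ σ_ap(L)`, `A(λ)` and `D(λ)` are boundedly invertible, `C(λ)` is
`A(λ)`-bounded and `B(λ)` is `D(λ)`-bounded, then `λ` lies in the approximate point
spectrum of one of the Schur complements `S₁(λ) = A − B D⁻¹ C` or
`S₂(λ) = D − C A⁻¹ B`. -/
theorem sigmaAp_mem_schur_of_diagonally_dominant
    (Ω : Set ℂ) (A : ℂ → H₁ →ₗ.[ℂ] H₁) (B : ℂ → H₂ →ₗ.[ℂ] H₁)
    (C : ℂ → H₁ →ₗ.[ℂ] H₂) (D : ℂ → H₂ →ₗ.[ℂ] H₂)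
    (l : ℂ) (hl : l ∈ Ω)
    (hap : ∃ (f : ℕ → H₁) (g : ℕ → H₂) (hfA : ∀ n, f n ∈ (A l).domain)
      (hfC : ∀ n, f n ∈ (C l).domain) (hgB : ∀ n, g n ∈ (B l).domain)
      (hgD : ∀ n, g n ∈ (D l).domain),
      (∀ n, ‖(WithLp.equiv 2 (H₁ × H₂)).symm (f n, g n)‖ = 1) ∧
      Tendsto (fun n => (WithLp.equiv 2 (H₁ × H₂)).symm
        ((A l) ⟨f n, hfA n⟩ + (B l) ⟨g n, hgB n⟩,
          (C l) ⟨f n, hfC n⟩ + (D l) ⟨g n, hgD n⟩)) atTop (𝓝 0))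
    (RA : H₁ →L[ℂ] H₁) (hRA : IsBddInv (A l) RA)
    (RD : H₂ →L[ℂ] H₂) (hRD : IsBddInv (D l) RD)
    (hAC : ((A l).domain : Set H₁) ⊆ ((C l).domain : Set H₁))
    (hCbd : ∃ a b : ℝ, 0 ≤ a ∧ 0 ≤ b ∧ ∀ (f : H₁) (hf : f ∈ (A l).domain),
      ‖(C l) ⟨f, hAC hf⟩‖ ≤ a * ‖f‖ + b * ‖(A l) ⟨f, hf⟩‖)
    (hDB : ((D l).domain : Set H₂) ⊆ ((B l).domain : Set H₂))
    (hBbd : ∃ a b : ℝ, 0 ≤ a ∧ 0 ≤ b ∧ ∀ (g : H₂) (hg : g ∈ (D l).domain),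
      ‖(B l) ⟨g, hDB hg⟩‖ ≤ a * ‖g‖ + b * ‖(D l) ⟨g, hg⟩‖) :
    (∃ (f : ℕ → H₁) (hfA : ∀ n, f n ∈ (A l).domain) (hfC : ∀ n, f n ∈ (C l).domain)
      (hB : ∀ n, RD ((C l) ⟨f n, hfC n⟩) ∈ (B l).domain),
      (∀ n, ‖f n‖ = 1) ∧
      Tendsto (fun n => (A l) ⟨f n, hfA n⟩
        - (B l) ⟨RD ((C l) ⟨f n, hfC n⟩), hB n⟩) atTop (𝓝 0)) ∨
    (∃ (g : ℕ → H₂) (hgB : ∀ n, g n ∈ (B l).domain) (hgD : ∀ n, g n ∈ (D l).domain)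
      (hC : ∀ n, RA ((B l) ⟨g n, hgB n⟩) ∈ (C l).domain),
      (∀ n, ‖g n‖ = 1) ∧
      Tendsto (fun n => (D l) ⟨g n, hgD n⟩
        - (C l) ⟨RA ((B l) ⟨g n, hgB n⟩), hC n⟩) atTop (𝓝 0)) :=
  sigmaAp_mem_schur_of_diagonally_dominant_general A B C D l hap RA hRA RD hRD hAC hCbd hDB hBbd

end
end

section
/- Let L be a 2×2 operator matrix function on Ω in H = H₁ ⊕ H₂, let s ∈ {+1, −1}, and let λ ∈ Ω satisfy: λ ∈ σ_ap(L); D(λ) is boundedly invertible; ⟨C(λ)f, v⟩ = s·⟨f, B(λ)v⟩ for all f ∈ dom C(λ) and v ∈ dom B(λ) (i.e. C(λ) ⊆ s·B(λ)*); Re⟨A(λ)f, f⟩ ≥ 0 for all f ∈ dom A(λ) (A(λ) is accretive); there is ψ ∈ [0, π/2) such that Re⟨−s·D(λ)v, v⟩ ≥ 0 and |Im⟨−s·D(λ)v, v⟩| ≤ tan(ψ)·Re⟨−s·D(λ)v, v⟩ for all v ∈ dom D(λ) (−s·D(λ) is sectorial with vertex 0); dom D(λ) ⊆ dom B(λ)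 and B(λ) is D(λ)-bounded. Then λ ∈ σ_ap(S₁) or 0 ∈ closure{⟨D(λ)v, v⟩ : v ∈ dom D(λ), ‖v‖ = 1}. -/
/-!
Test the approximate eigenvectors `(fₙ, gₙ)` of `L(λ)` against `(fₙ, -s·gₙ)`. Because `C ⊆ s·B*`,
the off-diagonal terms contribute only an imaginary part, so accretivity of `A` gives
`Re⟨-s·D gₙ, gₙ⟩ ≤ ‖L (fₙ, gₙ)‖ → 0`, and sectoriality of `-s·D` upgrades this to
`⟨D gₙ, gₙ⟩ → 0`. If `0` is not in the closure of the numerical range of `D`, then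
`|⟨D g, g⟩| ≥ δ‖g‖²`, hence `gₙ → 0` and `‖fₙ‖ → 1`. Finally
`S₁ fₙ = (A fₙ + B gₙ) - B D⁻¹ (C fₙ + D gₙ)` and `B D⁻¹` is bounded since `B` is `D`-bounded,
so `S₁ fₙ → 0`, and the normalized `fₙ` witness `λ ∈ σ_ap(S₁)`.
-/

open Filter Topology Real

noncomputable section

variable {H₁ H₂ : Type*}
  [NormedAddCommGroup H₁] [InnerProductSpace ℂ H₁] [CompleteSpace H₁]
  [NormedAddCommGroup H₂] [InnerProductSpace ℂ H₂] [CompleteSpace H₂]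

local notation "⟪" x ", " y "⟫" => @inner ℂ _ _ x y

namespace IsBddInv

variable {K₁ K₂ : Type*} [NormedAddCommGroup K₁] [NormedSpace ℂ K₁]
  [NormedAddCommGroup K₂] [NormedSpace ℂ K₂] {S : K₁ →ₗ.[ℂ] K₂} {R : K₂ →L[ℂ] K₁}

theorem apply_mem_domain (hR : IsBddInv S R) (y : K₂) : R y ∈ S.domain :=
  (hR.2 y).fst

theorem map_apply (hR : IsBddInv S R) (y : K₂) : S ⟨R y, hR.apply_mem_domain y⟩ = y :=
  (hR.2 y).snd

end IsBddInv

theorem Complex.norm_le_one_add_mul_re {z : ℂ} {c : ℝ} (hre : 0 ≤ z.re)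
    (him : |z.im| ≤ c * z.re) : ‖z‖ ≤ (1 + c) * z.re :=
  calc ‖z‖ ≤ |z.re| + |z.im| := Complex.norm_le_abs_re_add_abs_im z
    _ ≤ z.re + c * z.re := by rw [abs_of_nonneg hre]; gcongr
    _ = (1 + c) * z.re := by ring

theorem WithLp.tendsto_toLp_prod_zero_iff {p : ENNReal} [Fact (1 ≤ p)] {ι E F : Type*}
    [SeminormedAddCommGroup E] [SeminormedAddCommGroup F] {l : Filter ι} {x : ι → E}
    {y : ι → F} :
    Tendsto (fun n => (WithLp.equiv p (E × F)).symm (x n, y n)) l (𝓝 0) ↔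
      Tendsto x l (𝓝 0) ∧ Tendsto y l (𝓝 0) := by
  rw [(WithLp.homeomorphProd p E F).isInducing.tendsto_nhds_iff]
  exact Prod.tendsto_iff (fun n => (x n, y n)) (0, 0)

section NumericalRange

variable {𝕜 E : Type*} [RCLike 𝕜] [NormedAddCommGroup E] [InnerProductSpace 𝕜 E]

-- `inner 𝕜 v (T v)` is conjugate-linear in `v`: it is the paper's `⟨T v, v⟩`.
def LinearPMap.numericalRange (T : E →ₗ.[𝕜] E) : Set 𝕜 :=
  {z | ∃ (v : E) (hv : v ∈ T.domain), ‖v‖ = 1 ∧ z = inner 𝕜 v (T ⟨v, hv⟩)}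

theorem LinearPMap.norm_inner_map_smul (T : E →ₗ.[𝕜] E) (c : 𝕜) (v : T.domain) :
    ‖inner 𝕜 ((c • v : T.domain) : E) (T (c • v))‖ = ‖c‖ ^ 2 * ‖inner 𝕜 (v : E) (T v)‖ := by
  rw [T.map_smul, Submodule.coe_smul, inner_smul_left, inner_smul_right, ← mul_assoc,
    norm_mul, norm_mul, RCLike.norm_conj, sq]

theorem exists_pos_mul_norm_sq_le_of_zero_notMem_closure_numericalRange {T : E →ₗ.[𝕜] E}
    (hW : (0 : 𝕜) ∉ closure T.numericalRange) :
    ∃ δ > 0, ∀ v : T.domain, δ * ‖(v : E)‖ ^ 2 ≤ ‖inner 𝕜 (v : E) (T v)‖ := by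
  obtain ⟨δ, hδ, hfar⟩ : ∃ δ > 0, ∀ z ∈ T.numericalRange, δ ≤ dist 0 z := by
    simpa [Metric.mem_closure_iff] using hW
  refine ⟨δ, hδ, fun v => ?_⟩
  rcases eq_or_ne (v : E) 0 with hv | hv
  · simp [hv]
  have h := hfar _ ⟨_, ((‖(v : E)‖ : 𝕜)⁻¹ • v).2, norm_smul_inv_norm hv, rfl⟩
  rw [dist_zero_left, T.norm_inner_map_smul, norm_inv, RCLike.norm_ofReal, abs_norm] at h
  calc δ * ‖(v : E)‖ ^ 2 ≤ (‖(v : E)‖⁻¹ ^ 2 * ‖inner 𝕜 (v : E) (T v)‖) * ‖(v : E)‖ ^ 2 := by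
        gcongr
    _ = ‖inner 𝕜 (v : E) (T v)‖ := by field_simp

theorem tendsto_zero_of_zero_notMem_closure_numericalRange {T : E →ₗ.[𝕜] E}
    (hW : (0 : 𝕜) ∉ closure T.numericalRange) {ι : Type*} {l : Filter ι} {v : ι → T.domain}
    (hv : Tendsto (fun n => inner 𝕜 (v n : E) (T (v n))) l (𝓝 0)) :
    Tendsto (fun n => (v n : E)) l (𝓝 0) := by
  obtain ⟨δ, hδ, hlow⟩ := exists_pos_mul_norm_sq_le_of_zero_notMem_closure_numericalRange hW
  have hsq : Tendsto (fun n => ‖(v n : E)‖ ^ 2) l (𝓝 0) := by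
    refine squeeze_zero (fun n => by positivity) (fun n => ?_)
      ((hv.norm.const_mul δ⁻¹).trans_eq (by simp))
    rw [le_inv_mul_iff₀ hδ]
    exact hlow (v n)
  refine tendsto_zero_iff_norm_tendsto_zero.mpr ?_
  simpa [Real.sqrt_sq (norm_nonneg _)] using hsq.sqrt

end NumericalRange

theorem LinearPMap.exists_norm_eq_one_tendsto_zero {𝕜 E F : Type*} [RCLike 𝕜]
    [NormedAddCommGroup E] [NormedSpace 𝕜 E] [NormedAddCommGroup F] [NormedSpace 𝕜 F]
    (T : E →ₗ.[𝕜] F) {x : ℕ → T.domain} {c : ℝ} (hc : 0 < c)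
    (hx : ∀ᶠ n in atTop, c ≤ ‖(x n : E)‖) (hT : Tendsto (fun n => T (x n)) atTop (𝓝 0)) :
    ∃ y : ℕ → T.domain, (∀ n, ‖(y n : E)‖ = 1) ∧ Tendsto (fun n => T (y n)) atTop (𝓝 0) := by
  obtain ⟨N, hN⟩ := eventually_atTop.mp hx
  have hlow (n : ℕ) : c ≤ ‖(x (n + N) : E)‖ := hN _ (Nat.le_add_left N n)
  refine ⟨fun n => (‖(x (n + N) : E)‖ : 𝕜)⁻¹ • x (n + N), fun n => ?_, ?_⟩
  · exact norm_smul_inv_norm (norm_pos_iff.mp (hc.trans_le (hlow n)))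
  · refine squeeze_zero_norm (fun n => ?_)
      ((((tendsto_add_atTop_iff_nat N).mpr hT).norm.const_mul c⁻¹).trans_eq (by simp))
    rw [T.map_smul, norm_smul, norm_inv, RCLike.norm_ofReal, abs_norm]
    gcongr
    exact hlow n

section OperatorMatrix

variable {E F : Type*} [NormedAddCommGroup E] [InnerProductSpace ℂ E]
  [NormedAddCommGroup F] [InnerProductSpace ℂ F]
  {A : E →ₗ.[ℂ] E} {B : F →ₗ.[ℂ] E} {C : E →ₗ.[ℂ] F} {D : F →ₗ.[ℂ] F} {s : ℂ}

theorem re_neg_mul_inner_diag_le (hs : s = 1 ∨ s = -1)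
    (hadj : ∀ (f : E) (hf : f ∈ C.domain) (v : F) (hv : v ∈ B.domain),
      ⟪v, C ⟨f, hf⟩⟫ = s * ⟪B ⟨v, hv⟩, f⟫)
    (hacc : ∀ (f : E) (hf : f ∈ A.domain), 0 ≤ (⟪f, A ⟨f, hf⟩⟫).re)
    {f : E} (hfA : f ∈ A.domain) (hfC : f ∈ C.domain)
    {g : F} (hgB : g ∈ B.domain) (hgD : g ∈ D.domain) :
    (-s * ⟪g, D ⟨g, hgD⟩⟫).re ≤
      (⟪f, A ⟨f, hfA⟩ + B ⟨g, hgB⟩⟫ - s * ⟪g, C ⟨f, hfC⟩ + D ⟨g, hgD⟩⟫).re := by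
  set z := ⟪f, B ⟨g, hgB⟩⟫
  have hcross : ⟪g, C ⟨f, hfC⟩⟫ = s * (starRingEnd ℂ) z := by rw [hadj, inner_conj_symm]
  have hs2 : s * s = 1 := by rcases hs with rfl | rfl <;> norm_num
  have hexpand : ⟪f, A ⟨f, hfA⟩ + B ⟨g, hgB⟩⟫ - s * ⟪g, C ⟨f, hfC⟩ + D ⟨g, hgD⟩⟫
      = ⟪f, A ⟨f, hfA⟩⟫ + (z - (starRingEnd ℂ) z) + -s * ⟪g, D ⟨g, hgD⟩⟫ := by
    rw [inner_add_right, inner_add_right, hcross]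
    linear_combination (-(starRingEnd ℂ) z) * hs2
  rw [hexpand, Complex.add_re, Complex.add_re, Complex.sub_re, Complex.conj_re, sub_self,
    add_zero]
  linarith [hacc f hfA]

theorem tendsto_inner_diag_zero (hs : s = 1 ∨ s = -1)
    (hadj : ∀ (f : E) (hf : f ∈ C.domain) (v : F) (hv : v ∈ B.domain),
      ⟪v, C ⟨f, hf⟩⟫ = s * ⟪B ⟨v, hv⟩, f⟫)
    (hacc : ∀ (f : E) (hf : f ∈ A.domain), 0 ≤ (⟪f, A ⟨f, hf⟩⟫).re) {c : ℝ}
    (hsec : ∀ (v : F) (hv : v ∈ D.domain),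
      0 ≤ (⟪v, (-s) • D ⟨v, hv⟩⟫).re ∧
      |(⟪v, (-s) • D ⟨v, hv⟩⟫).im| ≤ c * (⟪v, (-s) • D ⟨v, hv⟩⟫).re)
    {f : ℕ → E} {g : ℕ → F} (hfA : ∀ n, f n ∈ A.domain) (hfC : ∀ n, f n ∈ C.domain)
    (hgB : ∀ n, g n ∈ B.domain) (hgD : ∀ n, g n ∈ D.domain)
    (hf : ∀ n, ‖f n‖ ≤ 1) (hg : ∀ n, ‖g n‖ ≤ 1)
    (hu : Tendsto (fun n => A ⟨f n, hfA n⟩ + B ⟨g n, hgB n⟩) atTop (𝓝 0))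
    (hw : Tendsto (fun n => C ⟨f n, hfC n⟩ + D ⟨g n, hgD n⟩) atTop (𝓝 0)) :
    Tendsto (fun n => ⟪g n, D ⟨g n, hgD n⟩⟫) atTop (𝓝 0) := by
  set r : ℕ → ℝ := fun n => (-s * ⟪g n, D ⟨g n, hgD n⟩⟫).re
  have hsec' (n : ℕ) : 0 ≤ r n ∧ |(-s * ⟪g n, D ⟨g n, hgD n⟩⟫).im| ≤ c * r n := by
    simpa only [inner_smul_right] using hsec (g n) (hgD n)
  have hns : ‖-s‖ = 1 := by rcases hs with rfl | rfl <;> norm_num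
  have hr_le (n : ℕ) : r n ≤ ‖A ⟨f n, hfA n⟩ + B ⟨g n, hgB n⟩‖
      + ‖C ⟨f n, hfC n⟩ + D ⟨g n, hgD n⟩‖ := by
    refine (re_neg_mul_inner_diag_le hs hadj hacc (hfA n) (hfC n) (hgB n) (hgD n)).trans
      ((Complex.re_le_norm _).trans ?_)
    rw [sub_eq_add_neg, ← neg_mul]
    refine (norm_add_le _ _).trans (add_le_add ?_ ?_)
    · exact (norm_inner_le_norm _ _).trans (mul_le_of_le_one_left (norm_nonneg _) (hf n))
    · rw [norm_mul, hns, one_mul]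
      exact (norm_inner_le_norm _ _).trans (mul_le_of_le_one_left (norm_nonneg _) (hg n))
  have hr : Tendsto r atTop (𝓝 0) :=
    squeeze_zero (fun n => (hsec' n).1) hr_le (by simpa using hu.norm.add hw.norm)
  refine squeeze_zero_norm (fun n => ?_) ((hr.const_mul (1 + c)).trans_eq (by rw [mul_zero]))
  calc ‖⟪g n, D ⟨g n, hgD n⟩⟫‖ = ‖-s * ⟪g n, D ⟨g n, hgD n⟩⟫‖ := by
        rw [norm_mul, hns, one_mul]
    _ ≤ (1 + c) * r n := Complex.norm_le_one_add_mul_re (hsec' n).1 (hsec' n).2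

-- `R` stands for `D⁻¹`; as `R` maps into `B.domain`, the paper's condition `D⁻¹ C f ∈ dom B` is
-- automatic and the domain is `A.domain ⊓ C.domain`.
def schurComplement (A : E →ₗ.[ℂ] E) (B : F →ₗ.[ℂ] E) (C : E →ₗ.[ℂ] F) (R : F →L[ℂ] F)
    (hRB : ∀ h, R h ∈ B.domain) : E →ₗ.[ℂ] E :=
  A - B.comp ((R : F →ₗ[ℂ] F).compPMap C) fun _ => hRB _

variable {R : F →L[ℂ] F}

theorem schurComplement_apply (hRB : ∀ h, R h ∈ B.domain) {f : E} (hfA : f ∈ A.domain)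
    (hfC : f ∈ C.domain) :
    schurComplement A B C R hRB ⟨f, hfA, hfC⟩ = A ⟨f, hfA⟩ - B ⟨R (C ⟨f, hfC⟩), hRB _⟩ :=
  rfl

theorem schurComplement_apply_eq_sub (hR : IsBddInv D R) (hRB : ∀ h, R h ∈ B.domain)
    {f : E} (hfA : f ∈ A.domain) (hfC : f ∈ C.domain)
    {g : F} (hgB : g ∈ B.domain) (hgD : g ∈ D.domain) :
    schurComplement A B C R hRB ⟨f, hfA, hfC⟩ =
      (A ⟨f, hfA⟩ + B ⟨g, hgB⟩) - B ⟨R (C ⟨f, hfC⟩ + D ⟨g, hgD⟩), hRB _⟩ := by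
  have hsplit : (⟨R (C ⟨f, hfC⟩ + D ⟨g, hgD⟩), hRB _⟩ : B.domain) =
      ⟨R (C ⟨f, hfC⟩), hRB _⟩ + ⟨g, hgB⟩ :=
    Subtype.ext (by simp [hR.1 ⟨g, hgD⟩])
  rw [hsplit, B.map_add, schurComplement_apply hRB hfA hfC]
  abel

theorem norm_comp_bddInv_le (hR : IsBddInv D R) (hDB : (D.domain : Set F) ⊆ B.domain)
    {a b : ℝ} (ha : 0 ≤ a)
    (hab : ∀ (g : F) (hg : g ∈ D.domain), ‖B ⟨g, hDB hg⟩‖ ≤ a * ‖g‖ + b * ‖D ⟨g, hg⟩‖)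
    (h : F) : ‖B ⟨R h, hDB (hR.apply_mem_domain h)⟩‖ ≤ (a * ‖R‖ + b) * ‖h‖ := by
  have hbound := hab _ (hR.apply_mem_domain h)
  rw [hR.map_apply] at hbound
  calc _ ≤ a * ‖R h‖ + b * ‖h‖ := hbound
    _ ≤ a * (‖R‖ * ‖h‖) + b * ‖h‖ := by gcongr; exact R.le_opNorm h
    _ = (a * ‖R‖ + b) * ‖h‖ := by ring

theorem tendsto_schurComplement_zero (hR : IsBddInv D R) (hDB : (D.domain : Set F) ⊆ B.domain)
    {a b : ℝ} (ha : 0 ≤ a)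
    (hab : ∀ (g : F) (hg : g ∈ D.domain), ‖B ⟨g, hDB hg⟩‖ ≤ a * ‖g‖ + b * ‖D ⟨g, hg⟩‖)
    {f : ℕ → E} {g : ℕ → F} (hfA : ∀ n, f n ∈ A.domain) (hfC : ∀ n, f n ∈ C.domain)
    (hgB : ∀ n, g n ∈ B.domain) (hgD : ∀ n, g n ∈ D.domain)
    (hu : Tendsto (fun n => A ⟨f n, hfA n⟩ + B ⟨g n, hgB n⟩) atTop (𝓝 0))
    (hw : Tendsto (fun n => C ⟨f n, hfC n⟩ + D ⟨g n, hgD n⟩) atTop (𝓝 0)) :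
    Tendsto (fun n => schurComplement A B C R (fun h => hDB (hR.apply_mem_domain h))
      ⟨f n, hfA n, hfC n⟩) atTop (𝓝 0) := by
  have hBR : Tendsto (fun n => B ⟨R (C ⟨f n, hfC n⟩ + D ⟨g n, hgD n⟩),
      hDB (hR.apply_mem_domain _)⟩) atTop (𝓝 0) :=
    squeeze_zero_norm (fun n => norm_comp_bddInv_le hR hDB ha hab _)
      ((hw.norm.const_mul _).trans_eq (by simp))
  have hlim := hu.sub hBR
  rw [sub_zero] at hlim
  refine hlim.congr fun n => ?_
  exact (schurComplement_apply_eq_sub hR (fun h => hDB (hR.apply_mem_domain h))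
    (hfA n) (hfC n) (hgB n) (hgD n)).symm

end OperatorMatrix

theorem sigmaAp_schur_or_closure_numRange_diag_general
    (A : ℂ → H₁ →ₗ.[ℂ] H₁) (B : ℂ → H₂ →ₗ.[ℂ] H₁)
    (C : ℂ → H₁ →ₗ.[ℂ] H₂) (D : ℂ → H₂ →ₗ.[ℂ] H₂)
    (s : ℂ) (hs : s = 1 ∨ s = -1)
    (l : ℂ)
    (hap : ∃ (f : ℕ → H₁) (g : ℕ → H₂) (hfA : ∀ n, f n ∈ (A l).domain)
      (hfC : ∀ n, f n ∈ (C l).domain) (hgB : ∀ n, g n ∈ (B l).domain)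
      (hgD : ∀ n, g n ∈ (D l).domain),
      (∀ n, ‖(WithLp.equiv 2 (H₁ × H₂)).symm (f n, g n)‖ = 1) ∧
      Tendsto (fun n => (WithLp.equiv 2 (H₁ × H₂)).symm
        ((A l) ⟨f n, hfA n⟩ + (B l) ⟨g n, hgB n⟩,
          (C l) ⟨f n, hfC n⟩ + (D l) ⟨g n, hgD n⟩)) atTop (𝓝 0))
    (RD : H₂ →L[ℂ] H₂) (hRD : IsBddInv (D l) RD)
    (hadj : ∀ (f : H₁) (hf : f ∈ (C l).domain) (v : H₂) (hv : v ∈ (B l).domain),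
      ⟪v, (C l) ⟨f, hf⟩⟫ = s * ⟪(B l) ⟨v, hv⟩, f⟫)
    (hacc : ∀ (f : H₁) (hf : f ∈ (A l).domain), 0 ≤ (⟪f, (A l) ⟨f, hf⟩⟫).re)
    (ψ : ℝ)
    (hsec : ∀ (v : H₂) (hv : v ∈ (D l).domain),
      0 ≤ (⟪v, (-s) • ((D l) ⟨v, hv⟩)⟫).re ∧
      |(⟪v, (-s) • ((D l) ⟨v, hv⟩)⟫).im| ≤ Real.tan ψ * (⟪v, (-s) • ((D l) ⟨v, hv⟩)⟫).re)
    (hDB : ((D l).domain : Set H₂) ⊆ ((B l).domain : Set H₂))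
    (hBbd : ∃ a b : ℝ, 0 ≤ a ∧ 0 ≤ b ∧ ∀ (g : H₂) (hg : g ∈ (D l).domain),
      ‖(B l) ⟨g, hDB hg⟩‖ ≤ a * ‖g‖ + b * ‖(D l) ⟨g, hg⟩‖) :
    (∃ (f : ℕ → H₁) (hfA : ∀ n, f n ∈ (A l).domain) (hfC : ∀ n, f n ∈ (C l).domain)
      (hB : ∀ n, RD ((C l) ⟨f n, hfC n⟩) ∈ (B l).domain),
      (∀ n, ‖f n‖ = 1) ∧
      Tendsto (fun n => (A l) ⟨f n, hfA n⟩
        - (B l) ⟨RD ((C l) ⟨f n, hfC n⟩), hB n⟩) atTop (𝓝 0)) ∨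
    (0 : ℂ) ∈ closure {z : ℂ | ∃ (v : H₂) (hv : v ∈ (D l).domain),
      ‖v‖ = 1 ∧ z = ⟪v, (D l) ⟨v, hv⟩⟫} := by
  by_cases hW : (0 : ℂ) ∈ closure (D l).numericalRange
  · exact Or.inr hW
  left
  obtain ⟨f, g, hfA, hfC, hgB, hgD, hnorm, hL⟩ := hap
  obtain ⟨hu, hw⟩ := WithLp.tendsto_toLp_prod_zero_iff.mp hL
  have hfg (n : ℕ) : ‖f n‖ ^ 2 + ‖g n‖ ^ 2 = 1 := by
    have h := WithLp.prod_norm_sq_eq_of_L2 ((WithLp.equiv 2 (H₁ × H₂)).symm (f n, g n))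
    rw [hnorm n] at h
    simpa using h.symm
  have hf (n : ℕ) : ‖f n‖ ≤ 1 := by nlinarith [hfg n, norm_nonneg (f n), sq_nonneg ‖g n‖]
  have hg (n : ℕ) : ‖g n‖ ≤ 1 := by nlinarith [hfg n, norm_nonneg (g n), sq_nonneg ‖f n‖]
  have hg0 : Tendsto g atTop (𝓝 0) :=
    tendsto_zero_of_zero_notMem_closure_numericalRange (v := fun n => ⟨g n, hgD n⟩) hW
      (tendsto_inner_diag_zero hs hadj hacc hsec hfA hfC hgB hgD hf hg hu hw)
  have hf_low : ∀ᶠ n in atTop, 1 / 2 ≤ ‖f n‖ := by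
    filter_upwards [(tendsto_zero_iff_norm_tendsto_zero.mp hg0).eventually
      (gt_mem_nhds (by norm_num : (0 : ℝ) < 1 / 2))] with n hn
    nlinarith [hfg n, norm_nonneg (f n), norm_nonneg (g n)]
  obtain ⟨a, b, ha, -, hab⟩ := hBbd
  obtain ⟨y, hy1, hy⟩ := LinearPMap.exists_norm_eq_one_tendsto_zero _ (by norm_num) hf_low
    (tendsto_schurComplement_zero hRD hDB ha hab hfA hfC hgB hgD hu hw)
  exact ⟨fun n => y n, fun n => (y n).2.1, fun n => (y n).2.2,
    fun n => hDB (hRD.apply_mem_domain _), hy1, hy⟩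

/-- If `λ ∈ σ_ap(L)`, `D(λ)` is boundedly invertible, `C(λ) ⊆ s·B(λ)*` with `s = ±1`,
`A(λ)` is accretive, `−s·D(λ)` is sectorial with vertex `0`, and `B(λ)` is
`D(λ)`-bounded, then `λ ∈ σ_ap(S₁)` or `0 ∈ closure W(D(λ))`. -/
theorem sigmaAp_schur_or_closure_numRange_diag
    (Ω : Set ℂ) (A : ℂ → H₁ →ₗ.[ℂ] H₁) (B : ℂ → H₂ →ₗ.[ℂ] H₁)
    (C : ℂ → H₁ →ₗ.[ℂ] H₂) (D : ℂ → H₂ →ₗ.[ℂ] H₂)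
    (s : ℂ) (hs : s = 1 ∨ s = -1)
    (l : ℂ) (hl : l ∈ Ω)
    (hap : ∃ (f : ℕ → H₁) (g : ℕ → H₂) (hfA : ∀ n, f n ∈ (A l).domain)
      (hfC : ∀ n, f n ∈ (C l).domain) (hgB : ∀ n, g n ∈ (B l).domain)
      (hgD : ∀ n, g n ∈ (D l).domain),
      (∀ n, ‖(WithLp.equiv 2 (H₁ × H₂)).symm (f n, g n)‖ = 1) ∧
      Tendsto (fun n => (WithLp.equiv 2 (H₁ × H₂)).symm
        ((A l) ⟨f n, hfA n⟩ + (B l) ⟨g n, hgB n⟩,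
          (C l) ⟨f n, hfC n⟩ + (D l) ⟨g n, hgD n⟩)) atTop (𝓝 0))
    (RD : H₂ →L[ℂ] H₂) (hRD : IsBddInv (D l) RD)
    (hadj : ∀ (f : H₁) (hf : f ∈ (C l).domain) (v : H₂) (hv : v ∈ (B l).domain),
      ⟪v, (C l) ⟨f, hf⟩⟫ = s * ⟪(B l) ⟨v, hv⟩, f⟫)
    (hacc : ∀ (f : H₁) (hf : f ∈ (A l).domain), 0 ≤ (⟪f, (A l) ⟨f, hf⟩⟫).re)
    (ψ : ℝ) (hψ0 : 0 ≤ ψ) (hψ1 : ψ < π / 2)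
    (hsec : ∀ (v : H₂) (hv : v ∈ (D l).domain),
      0 ≤ (⟪v, (-s) • ((D l) ⟨v, hv⟩)⟫).re ∧
      |(⟪v, (-s) • ((D l) ⟨v, hv⟩)⟫).im| ≤ Real.tan ψ * (⟪v, (-s) • ((D l) ⟨v, hv⟩)⟫).re)
    (hDB : ((D l).domain : Set H₂) ⊆ ((B l).domain : Set H₂))
    (hBbd : ∃ a b : ℝ, 0 ≤ a ∧ 0 ≤ b ∧ ∀ (g : H₂) (hg : g ∈ (D l).domain),
      ‖(B l) ⟨g, hDB hg⟩‖ ≤ a * ‖g‖ + b * ‖(D l) ⟨g, hg⟩‖) :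
    (∃ (f : ℕ → H₁) (hfA : ∀ n, f n ∈ (A l).domain) (hfC : ∀ n, f n ∈ (C l).domain)
      (hB : ∀ n, RD ((C l) ⟨f n, hfC n⟩) ∈ (B l).domain),
      (∀ n, ‖f n‖ = 1) ∧
      Tendsto (fun n => (A l) ⟨f n, hfA n⟩
        - (B l) ⟨RD ((C l) ⟨f n, hfC n⟩), hB n⟩) atTop (𝓝 0)) ∨
    (0 : ℂ) ∈ closure {z : ℂ | ∃ (v : H₂) (hv : v ∈ (D l).domain),
      ‖v‖ = 1 ∧ z = ⟪v, (D l) ⟨v, hv⟩⟫} :=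
  sigmaAp_schur_or_closure_numRange_diag_general A B C D s hs l hap RD hRD hadj hacc ψ hsec hDB hBbd

end
end

section
/- Let A : dom A ⊆ H₁ → H₁, B : dom B ⊆ H₂ → H₁, C : dom C ⊆ H₁ → H₂, D : dom D ⊆ H₂ → H₂ be linear operators with ⟨Bg, f⟩ = ⟨g, Cf⟩ for all g ∈ dom B and f ∈ dom C (i.e. C ⊆ B*). Assume there are δ < 0 < α with Re⟨Af, f⟩ ≥ α‖f‖² for all f ∈ dom A and Re⟨Dg, g⟩ ≤ δ‖g‖² for all g ∈ dom D. Let λ ∈ ℂ with Re λ ∈ (δ, α) and suppose D − λ is boundedly invertible with inverse R. Then for every f ∈ dom A ∩ dom C with ‖f‖ = 1 and R(Cf) ∈ dom B, one has Re⟨Af − λf − B(R(Cf)), f⟩ ≥ α − Re λ > 0; in particular, the closure of the numerical range of the first Schur complement S₁(λ) := A − λ − B(D − λ)^{-1}C satisfies Re closure(W(S₁(λ))) ≥ α − Re λ > 0. -/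
noncomputable section

variable {H₁ H₂ : Type*}
  [NormedAddCommGroup H₁] [InnerProductSpace ℂ H₁] [CompleteSpace H₁]
  [NormedAddCommGroup H₂] [InnerProductSpace ℂ H₂] [CompleteSpace H₂]

local notation "⟪" x ", " y "⟫" => @inner ℂ _ _ x y

/-- If `C ⊆ B*`, `Re W(A) ≥ α > 0 > δ ≥ Re W(D)` and `Re λ ∈ (δ, α)` with `D − λ`
boundedly invertible (inverse `R`), then the numerical range of the first Schur
complement `S₁(λ) = A − λ − B(D − λ)⁻¹C` satisfies
`Re W(S₁(λ)) ≥ α − Re λ > 0`, and hence so does its closure. -/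
theorem schur_numRange_re_bound
    (A : H₁ →ₗ.[ℂ] H₁) (B : H₂ →ₗ.[ℂ] H₁) (C : H₁ →ₗ.[ℂ] H₂) (D : H₂ →ₗ.[ℂ] H₂)
    (hCB : ∀ (g : B.domain) (f : C.domain), ⟪(f : H₁), B g⟫ = ⟪C f, (g : H₂)⟫)
    (δ α : ℝ) (hδ : δ < 0) (hα : 0 < α)
    (hA : ∀ f : A.domain, α * ‖(f : H₁)‖ ^ 2 ≤ (⟪(f : H₁), A f⟫).re)
    (hD : ∀ g : D.domain, (⟪(g : H₂), D g⟫).re ≤ δ * ‖(g : H₂)‖ ^ 2)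
    (l : ℂ) (hl1 : δ < l.re) (hl2 : l.re < α)
    (R : H₂ →L[ℂ] H₂)
    (hR1 : ∀ v : D.domain, R (D v - l • (v : H₂)) = v)
    (hR2 : ∀ h : H₂, ∃ hm : R h ∈ D.domain, D ⟨R h, hm⟩ - l • (R h) = h) :
    (∀ (f : H₁) (hfA : f ∈ A.domain) (hfC : f ∈ C.domain), ‖f‖ = 1 →
      ∀ hB : R (C ⟨f, hfC⟩) ∈ B.domain,
        α - l.re ≤ (⟪f, A ⟨f, hfA⟩ - l • f - B ⟨R (C ⟨f, hfC⟩), hB⟩⟫).re ∧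
        0 < α - l.re) ∧
    (∀ z ∈ closure {z : ℂ | ∃ (f : H₁) (hfA : f ∈ A.domain) (hfC : f ∈ C.domain)
        (hB : R (C ⟨f, hfC⟩) ∈ B.domain), ‖f‖ = 1 ∧
        z = ⟪f, A ⟨f, hfA⟩ - l • f - B ⟨R (C ⟨f, hfC⟩), hB⟩⟫},
      α - l.re ≤ z.re) := by
  have key : ∀ (f : H₁) (hfA : f ∈ A.domain) (hfC : f ∈ C.domain), ‖f‖ = 1 →
      ∀ hB : R (C ⟨f, hfC⟩) ∈ B.domain,
        α - l.re ≤ (⟪f, A ⟨f, hfA⟩ - l • f - B ⟨R (C ⟨f, hfC⟩), hB⟩⟫).re := by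
    intro f hfA hfC hf hB
    obtain ⟨hm, heq⟩ := hR2 (C ⟨f, hfC⟩)
    set g : H₂ := R (C ⟨f, hfC⟩) with hg
    -- bound on Re ⟪f, B g⟫
    have hBC : ⟪f, B ⟨g, hB⟩⟫ = ⟪C ⟨f, hfC⟩, g⟫ := hCB ⟨g, hB⟩ ⟨f, hfC⟩
    have h2 : ⟪C ⟨f, hfC⟩, g⟫ = ⟪D ⟨g, hm⟩ - l • g, g⟫ := by rw [heq]
    have hDg : (⟪D ⟨g, hm⟩, (g : H₂)⟫).re ≤ δ * ‖g‖ ^ 2 := by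
      have := hD ⟨g, hm⟩
      rwa [← inner_conj_symm, Complex.conj_re] at this
    have hre2 : (⟪(l • g : H₂), (g : H₂)⟫ : ℂ).re = l.re * ‖g‖ ^ 2 := by
      rw [inner_smul_left, Complex.mul_re, inner_self_eq_norm_sq_to_K]
      simp [RCLike.ofReal_pow, ← Complex.ofReal_pow]
    have hre : (⟪f, B ⟨g, hB⟩⟫).re ≤ (δ - l.re) * ‖g‖ ^ 2 := by
      rw [hBC, h2, inner_sub_left, Complex.sub_re, hre2]
      nlinarith [hDg]
    have hBg_nonpos : (⟪f, B ⟨g, hB⟩⟫).re ≤ 0 := by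
      have : (δ - l.re) * ‖g‖ ^ 2 ≤ 0 :=
        mul_nonpos_of_nonpos_of_nonneg (by linarith) (sq_nonneg _)
      linarith
    have hAf := hA ⟨f, hfA⟩
    rw [show ((⟨f, hfA⟩ : A.domain) : H₁) = f from rfl, hf] at hAf
    simp only [one_pow, mul_one] at hAf
    have hinner : ⟪f, A ⟨f, hfA⟩ - l • f - B ⟨g, hB⟩⟫
        = ⟪f, A ⟨f, hfA⟩⟫ - ⟪f, l • f⟫ - ⟪f, B ⟨g, hB⟩⟫ := by
      rw [inner_sub_right, inner_sub_right]
    have hlf : (⟪f, l • f⟫ : ℂ).re = l.re := by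
      rw [inner_smul_right]
      have : (⟪f, f⟫ : ℂ) = (1 : ℂ) := by
        rw [inner_self_eq_norm_sq_to_K, hf]; norm_num
      rw [this, mul_one]
    rw [hinner]
    simp only [Complex.sub_re]
    rw [hlf]
    linarith
  constructor
  · intro f hfA hfC hf hB
    exact ⟨key f hfA hfC hf hB, by linarith⟩
  · intro z hz
    have hsub : {z : ℂ | ∃ (f : H₁) (hfA : f ∈ A.domain) (hfC : f ∈ C.domain)
        (hB : R (C ⟨f, hfC⟩) ∈ B.domain), ‖f‖ = 1 ∧
        z = ⟪f, A ⟨f, hfA⟩ - l • f - B ⟨R (C ⟨f, hfC⟩), hB⟩⟫}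
        ⊆ {z : ℂ | α - l.re ≤ z.re} := by
      rintro w ⟨f, hfA, hfC, hB, hf, rfl⟩
      exact key f hfA hfC hf hB
    have hclosed : IsClosed {z : ℂ | α - l.re ≤ z.re} :=
      isClosed_le continuous_const Complex.continuous_re
    exact closure_minimal hsub hclosed hz

end
end

section
/- Let A : dom A ⊆ H₁ → H₁, B : dom B ⊆ H₂ → H₁, C : dom C ⊆ H₁ → H₂, D : dom D ⊆ H₂ → H₂ be linear operators with ⟨Bg, f⟩ = ⟨g, Cf⟩ for all g ∈ dom B and f ∈ dom C (i.e. C ⊆ B*). Assume there are φ, ψ ∈ [0, π/2) with ⟨Af, f⟩ ∈ Σ_φ for all f ∈ dom A and ⟨Dg, g⟩ ∈ −Σ_ψ for all g ∈ dom D, and set τ := max{φ, ψ}. Let λ ∈ ℂ be such that D − λ is boundedly invertible. If arg λ ∈ (τ, π − τ), then for every f ∈ dom S₁(λ) with ‖f‖ = 1 one has arg(⟨S₁(λ)f, f⟩ + λ) ∈ [−arg λ, τ]; if arg λ ∈ (−π + τ, −τ), then for every such f one has arg(⟨S₁(λ)f, f⟩ + λ) ∈ [−τ, −arg λ]. -/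
/-!
Writing `g := (D - λ)⁻¹ C f`, the hypothesis `C ⊆ B*` turns `⟨B g, f⟩` into `⟨g, (D - λ) g⟩`, so
`⟨S₁(λ) f, f⟩ + λ = ⟨A f, f⟩ - conj ⟨D g, g⟩ + ‖g‖² conj λ`.
All three summands have their argument in the arc between `-arg λ` and `±τ`, whose opening is
less than `π`. The complex numbers with argument in such an arc form the intersection of two
closed half-planes through `0`, hence a convex cone, and so they contain the sum.
-/

open Real

noncomputable section

variable {H₁ H₂ : Type*}
  [NormedAddCommGroup H₁] [InnerProductSpace ℂ H₁] [CompleteSpace H₁]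
  [NormedAddCommGroup H₂] [InnerProductSpace ℂ H₂] [CompleteSpace H₂]

local notation "⟪" x ", " y "⟫" => @inner ℂ _ _ x y

/-- The closed sector `Σ_ω = {z ∈ ℂ : |arg z| ≤ ω}` with semi-axis `ℝ₊` and
semi-angle `ω`. -/
def SigmaSector (ω : ℝ) : Set ℂ := {z : ℂ | |z.arg| ≤ ω}

lemma Complex.abs_arg_conj (z : ℂ) : |(starRingEnd ℂ z).arg| = |z.arg| := by
  rw [Complex.arg_conj]
  split_ifs <;> simp [*]

lemma Complex.norm_mul_sin_arg_sub (z : ℂ) (θ : ℝ) :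
    ‖z‖ * Real.sin (z.arg - θ) = z.im * Real.cos θ - z.re * Real.sin θ := by
  rw [Real.sin_sub, ← Complex.norm_mul_sin_arg, ← Complex.norm_mul_cos_arg]
  ring

lemma Real.mem_Icc_iff_sin_sub {θ₁ θ₂ x : ℝ} (hlt : θ₁ < θ₂) (hπ : θ₂ < θ₁ + π)
    (hθ₁ : -π < θ₁) (hθ₂ : θ₂ < π) (hx : x ∈ Set.Ioc (-π) π) :
    x ∈ Set.Icc θ₁ θ₂ ↔ 0 ≤ sin (x - θ₁) ∧ sin (x - θ₂) ≤ 0 := by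
  obtain ⟨hx₁, hx₂⟩ := hx
  refine ⟨fun ⟨h₁, h₂⟩ => ⟨sin_nonneg_of_nonneg_of_le_pi (by linarith) (by linarith),
    sin_nonpos_of_nonpos_of_neg_pi_le (by linarith) (by linarith)⟩, fun ⟨hs₁, hs₂⟩ => ⟨?_, ?_⟩⟩
  · by_contra! h
    rcases lt_or_ge (-π) (x - θ₁) with h' | h'
    · linarith [sin_neg_of_neg_of_neg_pi_lt (by linarith) h']
    · have : 0 < sin (x - θ₂ + 2 * π) := sin_pos_of_pos_of_lt_pi (by linarith) (by linarith)
      linarith [sin_add_two_pi (x - θ₂)]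
  · by_contra! h
    rcases lt_or_ge (x - θ₂) π with h' | h'
    · linarith [sin_pos_of_pos_of_lt_pi (by linarith) h']
    · have : sin (x - θ₁ - 2 * π) < 0 := sin_neg_of_neg_of_neg_pi_lt (by linarith) (by linarith)
      linarith [sin_sub_two_pi (x - θ₁)]

lemma Complex.arg_mem_Icc_iff {θ₁ θ₂ : ℝ} (hlt : θ₁ < θ₂) (hπ : θ₂ < θ₁ + π) (h₁ : θ₁ ≤ 0)
    (h₂ : 0 ≤ θ₂) {z : ℂ} :
    z.arg ∈ Set.Icc θ₁ θ₂ ↔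
      z.re * Real.sin θ₁ ≤ z.im * Real.cos θ₁ ∧ z.im * Real.cos θ₂ ≤ z.re * Real.sin θ₂ := by
  rcases eq_or_ne z 0 with rfl | hz
  · simp [h₁, h₂]
  have hnorm : 0 < ‖z‖ := norm_pos_iff.mpr hz
  rw [Real.mem_Icc_iff_sin_sub hlt hπ (by linarith) (by linarith) (Complex.arg_mem_Ioc z)]
  have e₁ := z.norm_mul_sin_arg_sub θ₁
  have e₂ := z.norm_mul_sin_arg_sub θ₂
  constructor
  · rintro ⟨hs₁, hs₂⟩
    constructor <;> nlinarith
  · rintro ⟨hs₁, hs₂⟩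
    constructor <;> nlinarith

lemma Complex.arg_add_mem_Icc {θ₁ θ₂ : ℝ} (hlt : θ₁ < θ₂) (hπ : θ₂ < θ₁ + π) (h₁ : θ₁ ≤ 0)
    (h₂ : 0 ≤ θ₂) {z w : ℂ} (hz : z.arg ∈ Set.Icc θ₁ θ₂) (hw : w.arg ∈ Set.Icc θ₁ θ₂) :
    (z + w).arg ∈ Set.Icc θ₁ θ₂ := by
  rw [Complex.arg_mem_Icc_iff hlt hπ h₁ h₂] at hz hw ⊢
  simp only [Complex.add_re, Complex.add_im]
  constructor <;> linarith [hz.1, hz.2, hw.1, hw.2]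

lemma Complex.arg_ofReal_mul_mem_Icc {θ₁ θ₂ : ℝ} (h₁ : θ₁ ≤ 0) (h₂ : 0 ≤ θ₂) {t : ℝ} (ht : 0 ≤ t)
    {z : ℂ} (hz : z.arg ∈ Set.Icc θ₁ θ₂) : ((t : ℂ) * z).arg ∈ Set.Icc θ₁ θ₂ := by
  rcases ht.eq_or_lt with rfl | ht
  · simp [h₁, h₂]
  · rwa [Complex.arg_real_mul z ht]

lemma sigmaSector_mono : Monotone SigmaSector :=
  fun _ _ h _ hz => le_trans hz h

lemma inner_schur_add_eq {E F : Type*} [NormedAddCommGroup E] [InnerProductSpace ℂ E]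
    [NormedAddCommGroup F] [InnerProductSpace ℂ F]
    (A : E →ₗ.[ℂ] E) (B : F →ₗ.[ℂ] E) (C : E →ₗ.[ℂ] F) (D : F →ₗ.[ℂ] F)
    (hCB : ∀ (g : B.domain) (f : C.domain), ⟪(f : E), B g⟫ = ⟪C f, (g : F)⟫) (l : ℂ)
    {f : E} (hfA : f ∈ A.domain) (hfC : f ∈ C.domain) (hf : ‖f‖ = 1)
    {g : F} (hgD : g ∈ D.domain) (hgB : g ∈ B.domain) (hg : C ⟨f, hfC⟩ = D ⟨g, hgD⟩ - l • g) :
    ⟪f, A ⟨f, hfA⟩ - l • f - B ⟨g, hgB⟩⟫ + l =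
      ⟪f, A ⟨f, hfA⟩⟫ + starRingEnd ℂ (-⟪g, D ⟨g, hgD⟩⟫) + (‖g‖ ^ 2 : ℝ) * starRingEnd ℂ l := by
  have hB : ⟪f, B ⟨g, hgB⟩⟫ = starRingEnd ℂ ⟪g, D ⟨g, hgD⟩⟫ - starRingEnd ℂ l * (‖g‖ ^ 2 : ℝ) := by
    rw [hCB ⟨g, hgB⟩ ⟨f, hfC⟩, hg, inner_sub_left, inner_smul_left, inner_conj_symm,
      inner_self_eq_norm_sq_to_K]
    push_cast
    rfl
  rw [inner_sub_right, inner_sub_right, inner_smul_right, inner_self_eq_norm_sq_to_K, hf, hB,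
    map_neg]
  push_cast
  ring

lemma arg_inner_schur_add_mem_Icc {E F : Type*} [NormedAddCommGroup E] [InnerProductSpace ℂ E]
    [NormedAddCommGroup F] [InnerProductSpace ℂ F]
    (A : E →ₗ.[ℂ] E) (B : F →ₗ.[ℂ] E) (C : E →ₗ.[ℂ] F) (D : F →ₗ.[ℂ] F)
    (hCB : ∀ (g : B.domain) (f : C.domain), ⟪(f : E), B g⟫ = ⟪C f, (g : F)⟫) {τ : ℝ}
    (hA : ∀ f : A.domain, ⟪(f : E), A f⟫ ∈ SigmaSector τ)
    (hD : ∀ g : D.domain, ⟪(g : F), D g⟫ ∈ -SigmaSector τ)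
    {θ₁ θ₂ : ℝ} (hlt : θ₁ < θ₂) (hπ : θ₂ < θ₁ + π) (hτ₁ : θ₁ ≤ -τ) (hτ₂ : τ ≤ θ₂)
    {l : ℂ} (hl : -l.arg ∈ Set.Icc θ₁ θ₂)
    {f : E} (hfA : f ∈ A.domain) (hfC : f ∈ C.domain) (hf : ‖f‖ = 1)
    {g : F} (hgD : g ∈ D.domain) (hgB : g ∈ B.domain) (hg : C ⟨f, hfC⟩ = D ⟨g, hgD⟩ - l • g) :
    (⟪f, A ⟨f, hfA⟩ - l • f - B ⟨g, hgB⟩⟫ + l).arg ∈ Set.Icc θ₁ θ₂ := by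
  have hτ : 0 ≤ τ := (abs_nonneg _).trans (hA ⟨0, A.domain.zero_mem⟩)
  have h₁ : θ₁ ≤ 0 := by linarith
  have h₂ : 0 ≤ θ₂ := by linarith
  have hsector : ∀ z ∈ SigmaSector τ, z.arg ∈ Set.Icc θ₁ θ₂ :=
    fun z hz => Set.Icc_subset_Icc hτ₁ hτ₂ (abs_le.mp hz)
  have hDconj : starRingEnd ℂ (-⟪g, D ⟨g, hgD⟩⟫) ∈ SigmaSector τ :=
    (Complex.abs_arg_conj _).trans_le (hD ⟨g, hgD⟩)
  have hlconj : (starRingEnd ℂ l).arg = -l.arg := by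
    rw [Complex.arg_conj, if_neg (by linarith [hl.1])]
  rw [inner_schur_add_eq A B C D hCB l hfA hfC hf hgD hgB hg]
  refine Complex.arg_add_mem_Icc hlt hπ h₁ h₂
    (Complex.arg_add_mem_Icc hlt hπ h₁ h₂ (hsector _ (hA ⟨f, hfA⟩)) (hsector _ hDconj))
    (Complex.arg_ofReal_mul_mem_Icc h₁ h₂ (sq_nonneg _) ?_)
  rwa [hlconj]

theorem schur_numRange_arg_bound_general
    (A : H₁ →ₗ.[ℂ] H₁) (B : H₂ →ₗ.[ℂ] H₁) (C : H₁ →ₗ.[ℂ] H₂) (D : H₂ →ₗ.[ℂ] H₂)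
    (hCB : ∀ (g : B.domain) (f : C.domain), ⟪(f : H₁), B g⟫ = ⟪C f, (g : H₂)⟫)
    (φ ψ : ℝ) (hφ0 : 0 ≤ φ)
    (hA : ∀ f : A.domain, ⟪(f : H₁), A f⟫ ∈ SigmaSector φ)
    (hD : ∀ g : D.domain, ⟪(g : H₂), D g⟫ ∈ -SigmaSector ψ)
    (l : ℂ)
    (R : H₂ →L[ℂ] H₂)
    (hR2 : ∀ h : H₂, ∃ hm : R h ∈ D.domain, D ⟨R h, hm⟩ - l • (R h) = h) :
    (l.arg ∈ Set.Ioo (max φ ψ) (π - max φ ψ) →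
      ∀ (f : H₁) (hfA : f ∈ A.domain) (hfC : f ∈ C.domain)
        (hB : R (C ⟨f, hfC⟩) ∈ B.domain), ‖f‖ = 1 →
        (⟪f, A ⟨f, hfA⟩ - l • f - B ⟨R (C ⟨f, hfC⟩), hB⟩⟫ + l).arg ∈
          Set.Icc (-l.arg) (max φ ψ)) ∧
    (l.arg ∈ Set.Ioo (-π + max φ ψ) (-(max φ ψ)) →
      ∀ (f : H₁) (hfA : f ∈ A.domain) (hfC : f ∈ C.domain)
        (hB : R (C ⟨f, hfC⟩) ∈ B.domain), ‖f‖ = 1 →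
        (⟪f, A ⟨f, hfA⟩ - l • f - B ⟨R (C ⟨f, hfC⟩), hB⟩⟫ + l).arg ∈
          Set.Icc (-(max φ ψ)) (-l.arg)) := by
  have hA' (f : A.domain) := sigmaSector_mono (le_max_left φ ψ) (hA f)
  have hD' (g : D.domain) : ⟪(g : H₂), D g⟫ ∈ -SigmaSector (max φ ψ) :=
    sigmaSector_mono (le_max_right φ ψ) (hD g)
  have hτ : 0 ≤ max φ ψ := le_max_of_le_left hφ0
  refine ⟨fun ⟨hl₁, hl₂⟩ f hfA hfC hB hf => ?_, fun ⟨hl₁, hl₂⟩ f hfA hfC hB hf => ?_⟩ <;>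
    obtain ⟨hgD, hg⟩ := hR2 (C ⟨f, hfC⟩)
  · exact arg_inner_schur_add_mem_Icc A B C D hCB hA' hD' (by linarith) (by linarith)
      (by linarith) le_rfl (Set.left_mem_Icc.mpr (by linarith)) hfA hfC hf hgD hB hg.symm
  · exact arg_inner_schur_add_mem_Icc A B C D hCB hA' hD' (by linarith) (by linarith)
      le_rfl (by linarith) (Set.right_mem_Icc.mpr (by linarith)) hfA hfC hf hgD hB hg.symm

/-- If `C ⊆ B*`, `W(A) ⊆ Σ_φ`, `W(D) ⊆ −Σ_ψ` with `φ, ψ ∈ [0, π/2)`, `τ = max{φ, ψ}`,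
and `D − λ` is boundedly invertible, then for unit `f ∈ dom S₁(λ)`:
`arg λ ∈ (τ, π − τ)` implies `arg(⟨S₁(λ)f, f⟩ + λ) ∈ [−arg λ, τ]`, and
`arg λ ∈ (−π + τ, −τ)` implies `arg(⟨S₁(λ)f, f⟩ + λ) ∈ [−τ, −arg λ]`. -/
theorem schur_numRange_arg_bound
    (A : H₁ →ₗ.[ℂ] H₁) (B : H₂ →ₗ.[ℂ] H₁) (C : H₁ →ₗ.[ℂ] H₂) (D : H₂ →ₗ.[ℂ] H₂)
    (hCB : ∀ (g : B.domain) (f : C.domain), ⟪(f : H₁), B g⟫ = ⟪C f, (g : H₂)⟫)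
    (φ ψ : ℝ) (hφ0 : 0 ≤ φ) (hφ1 : φ < π / 2) (hψ0 : 0 ≤ ψ) (hψ1 : ψ < π / 2)
    (hA : ∀ f : A.domain, ⟪(f : H₁), A f⟫ ∈ SigmaSector φ)
    (hD : ∀ g : D.domain, ⟪(g : H₂), D g⟫ ∈ -SigmaSector ψ)
    (l : ℂ)
    (R : H₂ →L[ℂ] H₂)
    (hR1 : ∀ v : D.domain, R (D v - l • (v : H₂)) = v)
    (hR2 : ∀ h : H₂, ∃ hm : R h ∈ D.domain, D ⟨R h, hm⟩ - l • (R h) = h) :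
    (l.arg ∈ Set.Ioo (max φ ψ) (π - max φ ψ) →
      ∀ (f : H₁) (hfA : f ∈ A.domain) (hfC : f ∈ C.domain)
        (hB : R (C ⟨f, hfC⟩) ∈ B.domain), ‖f‖ = 1 →
        (⟪f, A ⟨f, hfA⟩ - l • f - B ⟨R (C ⟨f, hfC⟩), hB⟩⟫ + l).arg ∈
          Set.Icc (-l.arg) (max φ ψ)) ∧
    (l.arg ∈ Set.Ioo (-π + max φ ψ) (-(max φ ψ)) →
      ∀ (f : H₁) (hfA : f ∈ A.domain) (hfC : f ∈ C.domain)
        (hB : R (C ⟨f, hfC⟩) ∈ B.domain), ‖f‖ = 1 →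
        (⟪f, A ⟨f, hfA⟩ - l • f - B ⟨R (C ⟨f, hfC⟩), hB⟩⟫ + l).arg ∈
          Set.Icc (-(max φ ψ)) (-l.arg)) :=
  schur_numRange_arg_bound_general A B C D hCB φ ψ hφ0 hA hD l R hR2

end
end
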